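/- arXiv:2105.03875 — 5 statements merged into one kernel-verified Lean document; each statement's English description precedes it below -/
import Mathlib

section
/- Consider a membership inference problem where T ∈ {0,1} is the membership indicator with P_m = max_t P(T=t), and the loss random variable R = ϱ(θ̂(Z), S) satisfies |R| ≤ ℓ_max. Then there exists an attack strategy φ (a function of the loss R) whose success probability satisfies P_Suc(φ) ≥ max{ P_m, P_m(|E_G|/(2ℓ_max) − 1) + 1 }, where E_G = E[R|T=0] − E[R|T=1] is the expected generalization gap. -/
open MeasureTheory

private lemma ind_int_Ici (L a : ℝ) (hL : 0 < L) (ha : -L ≤ a) (ha' : a ≤ L) :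
    ∫ τ in Set.Ioc (-L) L, (Set.Ici a).indicator (fun _ => (1:ℝ)) τ = L - a := by
  rw [setIntegral_indicator measurableSet_Ici, setIntegral_const, smul_eq_mul, mul_one]
  have hvol : volume (Set.Ioc (-L) L ∩ Set.Ici a) = ENNReal.ofReal (L - a) := by
    apply le_antisymm
    · refine le_trans (measure_mono ?_) (le_of_eq (Real.volume_Icc (a := a) (b := L)))
      rintro x ⟨⟨-, hx2⟩, hx3⟩; exact ⟨hx3, hx2⟩
    · refine le_trans (le_of_eq (Real.volume_Ioc (a := a) (b := L)).symm) (measure_mono ?_)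
      rintro x ⟨hx1, hx2⟩
      exact ⟨⟨lt_of_le_of_lt ha hx1, hx2⟩, le_of_lt hx1⟩
  rw [measureReal_def, hvol, ENNReal.toReal_ofReal (by linarith)]

private lemma ind_int_Iio (L a : ℝ) (hL : 0 < L) (ha : -L ≤ a) (ha' : a ≤ L) :
    ∫ τ in Set.Ioc (-L) L, (Set.Iio a).indicator (fun _ => (1:ℝ)) τ = a + L := by
  rw [setIntegral_indicator measurableSet_Iio, setIntegral_const, smul_eq_mul, mul_one]
  have hvol : volume (Set.Ioc (-L) L ∩ Set.Iio a) = ENNReal.ofReal (a + L) := by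
    apply le_antisymm
    · refine le_trans (measure_mono (t := Set.Ioc (-L) a) ?_) (le_of_eq ?_)
      · rintro x ⟨⟨hx1, -⟩, hx2⟩; exact ⟨hx1, le_of_lt hx2⟩
      · rw [Real.volume_Ioc]; congr 1; ring
    · refine le_trans (le_of_eq ?_) (measure_mono (s := Set.Ioo (-L) a) ?_)
      · rw [Real.volume_Ioo (a := -L) (b := a)]; congr 1; ring
      · rintro x ⟨hx1, hx2⟩
        exact ⟨⟨hx1, le_trans (le_of_lt hx2) ha'⟩, hx2⟩
  rw [measureReal_def, hvol, ENNReal.toReal_ofReal (by linarith)]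

private lemma key_thresh {Ω : Type*} [MeasurableSpace Ω] (μ : Measure Ω) [IsProbabilityMeasure μ]
    (T : Ω → Bool) (R : Ω → ℝ) (hT : Measurable T) (hR : Measurable R)
    (L : ℝ) (hL : 0 < L) (hbd : ∀ᵐ ω ∂μ, |R ω| ≤ L) :
    ∃ τ : ℝ, (L + (∫ ω in {ω | T ω = false}, R ω ∂μ) - (∫ ω in {ω | T ω = true}, R ω ∂μ)) / (2*L)
      ≤ (μ {ω | decide (R ω ≤ τ) = T ω}).toReal := by
  set ν : Measure ℝ := volume.restrict (Set.Ioc (-L) L) with hν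
  have hνuniv : ν Set.univ = ENNReal.ofReal (2*L) := by
    rw [hν, Measure.restrict_apply_univ, Real.volume_Ioc]; congr 1; ring
  haveI : IsFiniteMeasure ν := ⟨by rw [hνuniv]; exact ENNReal.ofReal_lt_top⟩
  have hν0 : ν ≠ 0 := by
    refine Measure.measure_univ_ne_zero.1 ?_
    rw [hνuniv]
    simp only [ne_eq, ENNReal.ofReal_eq_zero, not_le]
    linarith
  set E : Set (ℝ × Ω) := {p | decide (R p.2 ≤ p.1) = T p.2} with hEdef
  have hE : MeasurableSet E := by
    have hrepr : E = ({p : ℝ × Ω | R p.2 ≤ p.1} ∩ {p : ℝ × Ω | T p.2 = true}) ∪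
        ({p : ℝ × Ω | R p.2 ≤ p.1}ᶜ ∩ {p : ℝ × Ω | T p.2 = true}ᶜ) := by
      ext p
      cases h : T p.2 <;> simp [hEdef, h]
    have h1 : MeasurableSet {p : ℝ × Ω | R p.2 ≤ p.1} :=
      measurableSet_le (hR.comp measurable_snd) measurable_fst
    have h2 : MeasurableSet {p : ℝ × Ω | T p.2 = true} :=
      (hT.comp measurable_snd) (measurableSet_singleton true)
    rw [hrepr]
    exact (h1.inter h2).union (h1.compl.inter h2.compl)
  have hslice : ∀ τ : ℝ, MeasurableSet {ω | decide (R ω ≤ τ) = T ω} :=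
    fun τ => measurable_prodMk_left hE
  set F : ℝ → Ω → ℝ := fun τ ω => if decide (R ω ≤ τ) = T ω then 1 else 0 with hF
  have huncurry : Function.uncurry F = E.indicator (fun _ => (1:ℝ)) := by
    funext p
    by_cases h : decide (R p.2 ≤ p.1) = T p.2 <;>
      simp [Function.uncurry, hF, hEdef, Set.indicator_apply, h]
  have hFint : Integrable (Function.uncurry F) (ν.prod μ) := by
    rw [huncurry]
    exact (integrable_const (1:ℝ)).indicator hE
  have hS : ∀ τ : ℝ, (∫ ω, F τ ω ∂μ) = (μ {ω | decide (R ω ≤ τ) = T ω}).toReal := by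
    intro τ
    rw [← measureReal_def, ← integral_indicator_one (hslice τ)]
    congr 1; funext ω
    by_cases h : decide (R ω ≤ τ) = T ω <;> simp [hF, Set.indicator_apply, h]
  have hswap : ∫ τ, (∫ ω, F τ ω ∂μ) ∂ν = ∫ ω, (∫ τ, F τ ω ∂ν) ∂μ :=
    integral_integral_swap hFint
  have hinner : ∀ᵐ ω ∂μ, (∫ τ, F τ ω ∂ν) = if T ω = true then L - R ω else R ω + L := by
    filter_upwards [hbd] with ω hω
    obtain ⟨hω1, hω2⟩ := abs_le.1 hω
    cases h : T ω
    · have hfun : (fun τ => F τ ω) = (Set.Iio (R ω)).indicator (fun _ => (1:ℝ)) := by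
        funext τ
        by_cases hc : R ω ≤ τ
        · simp [hF, h, hc, Set.indicator_apply, not_lt.2 hc]
        · simp [hF, h, hc, Set.indicator_apply, lt_of_not_ge hc]
      rw [hfun, hν, if_neg (by simp [h]), ind_int_Iio L (R ω) hL hω1 hω2]
    · have hfun : (fun τ => F τ ω) = (Set.Ici (R ω)).indicator (fun _ => (1:ℝ)) := by
        funext τ
        by_cases hc : R ω ≤ τ <;> simp [hF, h, hc, Set.indicator_apply, Set.mem_Ici]
      rw [hfun, hν, if_pos (by simp [h]), ind_int_Ici L (R ω) hL hω1 hω2]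
  have hA : MeasurableSet {ω | T ω = true} := hT (measurableSet_singleton true)
  have hRint : Integrable R μ := by
    refine Integrable.mono' (integrable_const L) hR.aestronglyMeasurable ?_
    filter_upwards [hbd] with ω hω
    simpa [Real.norm_eq_abs] using hω
  have hgint : Integrable (fun ω => if T ω = true then L - R ω else R ω + L) μ := by
    refine Integrable.mono' (integrable_const (2*L))
      (Measurable.ite hA (measurable_const.sub hR) (hR.add measurable_const)).aestronglyMeasurable ?_
    filter_upwards [hbd] with ω hω
    obtain ⟨h1, h2⟩ := abs_le.1 hω
    cases h : T ω <;> simp only [h, Real.norm_eq_abs, if_true, if_false, Bool.false_eq_true,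
      abs_le] <;> constructor <;> linarith
  have hAc : {ω | T ω = true}ᶜ = {ω | T ω = false} := by
    ext ω; simp [Bool.not_eq_true]
  have houter : ∫ ω, (if T ω = true then L - R ω else R ω + L) ∂μ
      = L + (∫ ω in {ω | T ω = false}, R ω ∂μ) - (∫ ω in {ω | T ω = true}, R ω ∂μ) := by
    rw [← integral_add_compl hA hgint, hAc]
    have hB : MeasurableSet {ω | T ω = false} := hT (measurableSet_singleton false)
    have e1 : ∫ ω in {ω | T ω = true}, (if T ω = true then L - R ω else R ω + L) ∂μ
        = (μ {ω | T ω = true}).toReal * L - ∫ ω in {ω | T ω = true}, R ω ∂μ := by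
      rw [setIntegral_congr_fun hA (g := fun ω => L - R ω) (fun ω hω => by
        simp [show T ω = true from hω]),
        integral_sub (integrableOn_const (C := L) (measure_ne_top μ {ω | T ω = true})) hRint.integrableOn,
        setIntegral_const, smul_eq_mul, measureReal_def]
    have e2 : ∫ ω in {ω | T ω = false}, (if T ω = true then L - R ω else R ω + L) ∂μ
        = (∫ ω in {ω | T ω = false}, R ω ∂μ) + (μ {ω | T ω = false}).toReal * L := by
      rw [setIntegral_congr_fun hB (g := fun ω => R ω + L) (fun ω hω => by
        simp [show T ω = false from hω]),
        integral_add hRint.integrableOn (integrableOn_const),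
        setIntegral_const, smul_eq_mul, measureReal_def]
    have hsum : (μ {ω | T ω = true}).toReal + (μ {ω | T ω = false}).toReal = 1 := by
      have h' := measure_add_measure_compl (μ := μ) hA
      rw [measure_univ, hAc] at h'
      have h2 := congrArg ENNReal.toReal h'
      rwa [ENNReal.toReal_add (measure_ne_top _ _) (measure_ne_top _ _), ENNReal.toReal_one] at h2
    have hLsum : (μ {ω | T ω = true}).toReal * L + (μ {ω | T ω = false}).toReal * L = L := by
      rw [← add_mul, hsum, one_mul]
    rw [e1, e2]
    linarith
  have hSint : Integrable (fun τ => ∫ ω, F τ ω ∂μ) ν := hFint.integral_prod_left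
  obtain ⟨τ, hτ⟩ := exists_average_le hν0 hSint
  refine ⟨τ, ?_⟩
  rw [← hS τ]
  refine le_trans ?_ hτ
  rw [average_eq, measureReal_def, hνuniv, ENNReal.toReal_ofReal (by linarith), smul_eq_mul]
  have hint : ∫ τ, (∫ ω, F τ ω ∂μ) ∂ν
      = L + (∫ ω in {ω | T ω = false}, R ω ∂μ) - (∫ ω in {ω | T ω = true}, R ω ∂μ) := by
    rw [hswap, integral_congr_ae hinner, houter]
  rw [hint, div_eq_inv_mul]

private lemma alg_ineq (L p0 p1 I0 I1 : ℝ) (hL : 0 < L) (h0 : 0 < p0) (h1 : 0 < p1)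
    (hsum : p0 + p1 = 1) (hI0 : |I0| ≤ L * p0) (hI1 : |I1| ≤ L * p1) :
    max p0 p1 * ((I0 / p0 - I1 / p1) / (2 * L) - 1) + 1 ≤ (L + I0 - I1) / (2 * L) := by
  obtain ⟨hI0l, hI0u⟩ := abs_le.1 hI0
  obtain ⟨hI1l, hI1u⟩ := abs_le.1 hI1
  rcases le_total p0 p1 with h | h
  · rw [max_eq_right h]
    have hrw : (L + I0 - I1) / (2*L) - (p1 * ((I0/p0 - I1/p1)/(2*L) - 1) + 1)
        = ((p1 - p0) * (L * p0 - I0)) / (2*L*p0) := by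
      have hp : p1 = 1 - p0 := by linarith
      subst hp
      field_simp
      ring
    have : 0 ≤ (L + I0 - I1) / (2*L) - (p1 * ((I0/p0 - I1/p1)/(2*L) - 1) + 1) := by
      rw [hrw]
      apply div_nonneg (mul_nonneg (by linarith) (by linarith)) (by positivity)
    linarith
  · rw [max_eq_left h]
    have hrw : (L + I0 - I1) / (2*L) - (p0 * ((I0/p0 - I1/p1)/(2*L) - 1) + 1)
        = ((p0 - p1) * (L * p1 + I1)) / (2*L*p1) := by
      have hp : p0 = 1 - p1 := by linarith
      subst hp
      field_simp
      ring
    have : 0 ≤ (L + I0 - I1) / (2*L) - (p0 * ((I0/p0 - I1/p1)/(2*L) - 1) + 1) := by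
      rw [hrw]
      apply div_nonneg (mul_nonneg (by linarith) (by linarith)) (by positivity)
    linarith

/-- **Bounded loss: membership attack from the generalization gap.**
`T : Ω → Bool` is the membership indicator (`true` ↔ member), `R` is the bounded loss of
the trained model evaluated at the test sample, `|R| ≤ ℓmax` a.s.  With
`Pm = max(P{T=0}, P{T=1})` and expected generalization gap
`EG = E[R | T=0] - E[R | T=1]`, there is an attack strategy `φ`, a measurable function of
the loss, with success probability
`P{φ(R) = T} ≥ max {Pm, Pm·(|EG|/(2ℓmax) - 1) + 1}`. -/
theorem bounded_loss_attack
    {Ω : Type*} [MeasurableSpace Ω] (μ : Measure Ω) [IsProbabilityMeasure μ]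
    (T : Ω → Bool) (R : Ω → ℝ) (hT : Measurable T) (hR : Measurable R)
    (ℓmax : ℝ) (hℓ : 0 < ℓmax) (hbd : ∀ᵐ ω ∂μ, |R ω| ≤ ℓmax)
    (h0 : μ {ω | T ω = false} ≠ 0) (h1 : μ {ω | T ω = true} ≠ 0)
    (Pm EG : ℝ)
    (hPm : Pm = max (μ {ω | T ω = false}).toReal (μ {ω | T ω = true}).toReal)
    (hEG : EG = (∫ ω in {ω | T ω = false}, R ω ∂μ) / (μ {ω | T ω = false}).toReal
              - (∫ ω in {ω | T ω = true}, R ω ∂μ) / (μ {ω | T ω = true}).toReal) :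
    ∃ φ : ℝ → Bool, Measurable φ ∧
      (μ {ω | φ (R ω) = T ω}).toReal ≥
        max Pm (Pm * (|EG| / (2 * ℓmax) - 1) + 1) := by
  classical
  have hA : MeasurableSet {ω | T ω = true} := hT (measurableSet_singleton true)
  have hB : MeasurableSet {ω | T ω = false} := hT (measurableSet_singleton false)
  set p1 := (μ {ω | T ω = true}).toReal with hp1def
  set p0 := (μ {ω | T ω = false}).toReal with hp0def
  set I1 := ∫ ω in {ω | T ω = true}, R ω ∂μ with hI1def
  set I0 := ∫ ω in {ω | T ω = false}, R ω ∂μ with hI0def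
  have hp1 : 0 < p1 := ENNReal.toReal_pos h1 (measure_ne_top μ _)
  have hp0 : 0 < p0 := ENNReal.toReal_pos h0 (measure_ne_top μ _)
  have hAc : {ω | T ω = true}ᶜ = {ω | T ω = false} := by
    ext ω; simp [Bool.not_eq_true]
  have hsum : p0 + p1 = 1 := by
    have h' := measure_add_measure_compl (μ := μ) hA
    rw [measure_univ, hAc] at h'
    have h2 := congrArg ENNReal.toReal h'
    rw [ENNReal.toReal_add (measure_ne_top _ _) (measure_ne_top _ _), ENNReal.toReal_one] at h2
    rw [hp0def, hp1def]
    linarith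
  have hRint : Integrable R μ := by
    refine Integrable.mono' (integrable_const ℓmax) hR.aestronglyMeasurable ?_
    filter_upwards [hbd] with ω hω
    simpa [Real.norm_eq_abs] using hω
  have bound : ∀ s : Set Ω, |∫ ω in s, R ω ∂μ| ≤ ℓmax * (μ s).toReal := by
    intro s
    have h1' : |∫ ω in s, R ω ∂μ| ≤ ∫ ω in s, |R ω| ∂μ := by
      simpa [Real.norm_eq_abs] using norm_integral_le_integral_norm (μ := μ.restrict s) R
    refine h1'.trans ?_
    have h2' : ∫ ω in s, |R ω| ∂μ ≤ ∫ ω in s, ℓmax ∂μ := by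
      refine integral_mono_ae hRint.abs.integrableOn
        (integrableOn_const) ?_
      exact ae_restrict_of_ae hbd
    rw [setIntegral_const, smul_eq_mul, mul_comm] at h2'
    exact h2'
  have hI1b : |I1| ≤ ℓmax * p1 := bound {ω | T ω = true}
  have hI0b : |I0| ≤ ℓmax * p0 := bound {ω | T ω = false}
  have hconst : ∃ φ : ℝ → Bool, Measurable φ ∧ Pm ≤ (μ {ω | φ (R ω) = T ω}).toReal := by
    rcases le_total p0 p1 with h | h
    · refine ⟨fun _ => true, measurable_const, ?_⟩
      have hset : {ω | (fun _ : ℝ => true) (R ω) = T ω} = {ω | T ω = true} := by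
        ext ω; simp only [Set.mem_setOf_eq]; exact eq_comm
      rw [hset, hPm, max_eq_right h, hp1def]
    · refine ⟨fun _ => false, measurable_const, ?_⟩
      have hset : {ω | (fun _ : ℝ => false) (R ω) = T ω} = {ω | T ω = false} := by
        ext ω; simp only [Set.mem_setOf_eq]; exact eq_comm
      rw [hset, hPm, max_eq_left h, hp0def]
  have hthresh : ∃ φ : ℝ → Bool, Measurable φ ∧
      Pm * (|EG| / (2 * ℓmax) - 1) + 1 ≤ (μ {ω | φ (R ω) = T ω}).toReal := by
    rcases le_total 0 EG with hEGpos | hEGneg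
    · obtain ⟨τ, hτ⟩ := key_thresh μ T R hT hR ℓmax hℓ hbd
      refine ⟨fun r => decide (r ≤ τ), ?_, ?_⟩
      · have hfe : (fun r : ℝ => decide (r ≤ τ)) = fun r => if r ≤ τ then true else false := by
          funext r; by_cases h : r ≤ τ <;> simp [h]
        rw [hfe]
        exact Measurable.ite measurableSet_Iic measurable_const measurable_const
      · refine le_trans ?_ hτ
        rw [hPm, show |EG| = I0 / p0 - I1 / p1 from by rw [abs_of_nonneg hEGpos, hEG]]
        exact alg_ineq ℓmax p0 p1 I0 I1 hℓ hp0 hp1 hsum hI0b hI1b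
    · have hT' : Measurable (fun ω => !T ω) := (Measurable.of_discrete (f := Bool.not)).comp hT
      obtain ⟨τ, hτ⟩ := key_thresh μ (fun ω => !T ω) R hT' hR ℓmax hℓ hbd
      simp only [Bool.not_eq_false', Bool.not_eq_true'] at hτ
      refine ⟨fun r => !decide (r ≤ τ), ?_, ?_⟩
      · have hfe : (fun r : ℝ => !decide (r ≤ τ)) = fun r => if r ≤ τ then false else true := by
          funext r; by_cases h : r ≤ τ <;> simp [h]
        rw [hfe]
        exact Measurable.ite measurableSet_Iic measurable_const measurable_const
      · have hset : {ω | (fun r : ℝ => !decide (r ≤ τ)) (R ω) = T ω}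
            = {ω | decide (R ω ≤ τ) = (!T ω)} := by
          ext ω
          simp only [Set.mem_setOf_eq]
          cases h : T ω <;> cases hc : decide (R ω ≤ τ) <;> simp [h, hc]
        rw [hset]
        refine le_trans ?_ hτ
        rw [hPm, show |EG| = I1 / p1 - I0 / p0 from by
          rw [abs_of_nonpos hEGneg, hEG]; ring, max_comm]
        exact alg_ineq ℓmax p1 p0 I1 I0 hℓ hp1 hp0 (by linarith) hI1b hI0b
  rcases le_total (Pm * (|EG| / (2 * ℓmax) - 1) + 1) Pm with h | h
  · rw [max_eq_left h]
    obtain ⟨φ, hφm, hφ⟩ := hconst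
    exact ⟨φ, hφm, hφ⟩
  · rw [max_eq_right h]
    obtain ⟨φ, hφm, hφ⟩ := hthresh
    exact ⟨φ, hφm, hφ⟩
end

section
/- In a membership inference problem where R = ϱ(θ̂(Z), S) is sub-Gaussian with variance proxy σ_R² and T ∈ {0,1} with P_m = max_t P(T=t) and P(T=0), P(T=1) ≥ 1 − P_m, for every R_max ≥ √(2σ_R² log 2) the L¹ distance of conditional densities satisfies ‖p_{R|T=0} − p_{R|T=1}‖₁ ≥ |E_G|/R_max − 2C(R_max, σ_R)/(1 − P_m), where C(R_max, σ_R) = exp(−R_max²/(2σ_R²))(1 + σ_R²/R_max²) and E_G = E[R|T=0] − E[R|T=1]. -/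
open MeasureTheory Real Set Filter

lemma gauss_integrable (σ : ℝ) (hσ : 0 < σ) :
    Integrable (fun s : ℝ => Real.exp (-(s^2)/(2*σ^2))) := by
  have h := integrable_exp_neg_mul_sq (b := 1/(2*σ^2)) (by positivity)
  convert h using 2 with s
  congr 1
  field_simp

lemma gauss_tail (σ b : ℝ) (hσ : 0 < σ) (hb : 0 < b) :
    ∫ s in Set.Ioi b, Real.exp (-(s^2)/(2*σ^2)) ≤ σ^2/b * Real.exp (-(b^2)/(2*σ^2)) := by
  set F : ℝ → ℝ := fun s => -(σ^2) * Real.exp (-(s^2)/(2*σ^2)) with hF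
  have hderiv : ∀ x ∈ Set.Ici b, HasDerivAt F (x * Real.exp (-(x^2)/(2*σ^2))) x := by
    intro x _
    have h1 : HasDerivAt (fun s : ℝ => -(s^2)/(2*σ^2)) (-(2*x^1)/(2*σ^2)) x :=
      ((hasDerivAt_pow 2 x).neg).div_const _
    have h2 := (h1.exp).const_mul (-(σ^2))
    refine h2.congr_deriv ?_
    field_simp
  have hto : Tendsto F atTop (nhds 0) := by
    have hs : Tendsto (fun s : ℝ => s^2) atTop atTop := tendsto_pow_atTop two_ne_zero
    have h2 : Tendsto (fun s : ℝ => -(s^2)/(2*σ^2)) atTop atBot := by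
      apply Filter.Tendsto.atBot_div_const (by positivity)
      exact tendsto_neg_atBot_iff.mpr hs
    have h3 := (Real.tendsto_exp_atBot).comp h2
    have h4 := h3.const_mul (-(σ^2))
    have : F = fun s => -(σ^2) * Real.exp (-(s^2)/(2*σ^2)) := rfl
    rw [this]
    simpa using h4
  have hint' : IntegrableOn (fun x => x * Real.exp (-(x^2)/(2*σ^2))) (Set.Ioi b) := by
    apply integrableOn_Ioi_deriv_of_nonneg
      ((hderiv b Set.self_mem_Ici).continuousAt.continuousWithinAt)
      (fun x hx => hderiv x (Set.mem_Ici.mpr (le_of_lt (Set.mem_Ioi.mp hx))))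
      (fun x hx => mul_nonneg (le_trans hb.le (le_of_lt hx)) (Real.exp_pos _).le) hto
  have hval : ∫ x in Set.Ioi b, x * Real.exp (-(x^2)/(2*σ^2)) = σ^2 * Real.exp (-(b^2)/(2*σ^2)) := by
    rw [integral_Ioi_of_hasDerivAt_of_tendsto' hderiv hint' hto]
    simp [hF]
  have hmono : ∫ s in Set.Ioi b, Real.exp (-(s^2)/(2*σ^2)) ≤
      ∫ x in Set.Ioi b, (x * Real.exp (-(x^2)/(2*σ^2))) / b := by
    apply setIntegral_mono_on ((gauss_integrable σ hσ).integrableOn) (hint'.div_const b)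
      measurableSet_Ioi
    intro x hx
    have hx' : b ≤ x := le_of_lt hx
    have he : 0 < Real.exp (-(x^2)/(2*σ^2)) := Real.exp_pos _
    rw [le_div_iff₀ hb]
    nlinarith
  calc ∫ s in Set.Ioi b, Real.exp (-(s^2)/(2*σ^2)) ≤ _ := hmono
    _ = (σ^2 * Real.exp (-(b^2)/(2*σ^2))) / b := by rw [integral_div, hval]
    _ = σ^2/b * Real.exp (-(b^2)/(2*σ^2)) := by ring

lemma tail_moment (p : ℝ → ℝ) (hnn : ∀ r, 0 ≤ p r) (hp : Integrable p)
    (σ Rmax : ℝ) (hσ : 0 < σ) (hR : 0 < Rmax)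
    (htail : ∀ c : ℝ, Rmax ≤ c →
      ∫ r in {r : ℝ | c < |r|}, p r ≤ 2 * Real.exp (-(c^2)/(2*σ^2))) :
    Integrable (fun r => |r| * p r) ∧
    ∫ r in {r : ℝ | Rmax < |r|}, |r| * p r ≤
      2 * Rmax * Real.exp (-(Rmax^2)/(2*σ^2)) * (1 + σ^2/Rmax^2) := by
  -- measurable a.e.-version of p
  set q : ℝ → ℝ := fun r => max (hp.1.mk p r) 0 with hq
  have hqm : Measurable q := hp.1.measurable_mk.max measurable_const
  have hqnn : ∀ r, 0 ≤ q r := fun r => le_max_right _ _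
  have hqe : q =ᵐ[volume] p := by
    filter_upwards [hp.1.ae_eq_mk] with r hr
    simp [hq, ← hr, hnn r, max_eq_left]
  have hqint : Integrable q := hp.congr hqe.symm
  -- tail weight function
  set g : ℝ → ℝ := fun r => if Rmax < |r| then |r| else 0 with hgdef
  have hSm : MeasurableSet {r : ℝ | Rmax < |r|} :=
    measurableSet_lt measurable_const continuous_abs.measurable
  have hgm : Measurable g := Measurable.ite hSm continuous_abs.measurable measurable_const
  have hgnn : ∀ r, 0 ≤ g r := by
    intro r; by_cases h : Rmax < |r| <;> simp [hgdef, h, abs_nonneg]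
  -- the measure with density q
  set ν : Measure ℝ := volume.withDensity (fun r => ENNReal.ofReal (q r)) with hν
  have hνA : ∀ A : Set ℝ, MeasurableSet A → ν A = ENNReal.ofReal (∫ r in A, p r) := by
    intro A hA
    rw [hν, withDensity_apply _ hA,
      ← ofReal_integral_eq_lintegral_ofReal hqint.integrableOn
        (Filter.Eventually.of_forall fun r => hqnn r)]
    congr 1
    exact integral_congr_ae (ae_restrict_of_ae hqe)
  -- layer cake
  have hlayer : ∫⁻ r, ENNReal.ofReal (g r) ∂ν = ∫⁻ t in Set.Ioi 0, ν {r : ℝ | t < g r} :=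
    lintegral_eq_lintegral_meas_lt ν (Filter.Eventually.of_forall hgnn)
      hgm.aemeasurable
  -- superlevel sets
  have hsets : ∀ t : ℝ, 0 < t → {r : ℝ | t < g r} = {r : ℝ | max Rmax t < |r|} := by
    intro t ht
    ext r
    simp only [Set.mem_setOf_eq, hgdef]
    constructor
    · intro hr
      by_cases h : Rmax < |r|
      · rw [if_pos h] at hr
        exact max_lt h hr
      · rw [if_neg h] at hr
        linarith
    · intro hr
      rw [max_lt_iff] at hr
      rw [if_pos hr.1]
      exact hr.2
  -- dominating function
  set G : ℝ → ℝ := fun t => 2 * Real.exp (-((max Rmax t)^2)/(2*σ^2)) with hGdef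
  have hGcont : Continuous G := by
    apply Continuous.mul continuous_const
    apply Real.continuous_exp.comp
    exact ((continuous_const.max continuous_id).pow 2).neg.div_const _
  have hGle : ∀ t : ℝ, 0 < t → G t ≤ 2 * Real.exp (-(t^2)/(2*σ^2)) := by
    intro t ht
    have hc : (0:ℝ) < 2*σ^2 := by positivity
    have h2 : t^2 ≤ (max Rmax t)^2 := by nlinarith [le_max_right Rmax t]
    have h3 : -((max Rmax t)^2)/(2*σ^2) ≤ -(t^2)/(2*σ^2) := by
      rw [div_le_div_iff₀ hc hc]
      nlinarith
    simp only [hGdef]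
    exact mul_le_mul_of_nonneg_left (Real.exp_le_exp.mpr h3) (by norm_num)
  have hgauss2 : Integrable (fun t : ℝ => 2 * Real.exp (-(t^2)/(2*σ^2))) :=
    (gauss_integrable σ hσ).const_mul 2
  have hGint : IntegrableOn G (Set.Ioi 0) := by
    apply Integrable.mono (hgauss2.integrableOn) hGcont.aestronglyMeasurable.restrict
    rw [ae_restrict_iff' measurableSet_Ioi]
    filter_upwards with t ht
    rw [Real.norm_eq_abs, Real.norm_eq_abs, abs_of_nonneg (by positivity),
      abs_of_nonneg (by positivity)]
    exact hGle t ht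
  -- value of ∫ G on Ioi 0
  have hGsplit : ∫ t in Set.Ioi 0, G t ≤
      2 * Rmax * Real.exp (-(Rmax^2)/(2*σ^2)) * (1 + σ^2/Rmax^2) := by
    have hunion : Set.Ioc 0 Rmax ∪ Set.Ioi Rmax = Set.Ioi 0 := Set.Ioc_union_Ioi_eq_Ioi hR.le
    have hdisj : Disjoint (Set.Ioc 0 Rmax) (Set.Ioi Rmax) := Set.Ioc_disjoint_Ioi le_rfl
    have hsplit : ∫ t in Set.Ioi 0, G t =
        (∫ t in Set.Ioc 0 Rmax, G t) + ∫ t in Set.Ioi Rmax, G t := by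
      rw [← hunion, setIntegral_union hdisj measurableSet_Ioi
        (hGint.mono_set (by rw [← hunion]; exact Set.subset_union_left))
        (hGint.mono_set (by rw [← hunion]; exact Set.subset_union_right))]
    have h1 : ∫ t in Set.Ioc 0 Rmax, G t = Rmax * (2 * Real.exp (-(Rmax^2)/(2*σ^2))) := by
      rw [setIntegral_congr_fun measurableSet_Ioc
        (g := fun _ => 2 * Real.exp (-(Rmax^2)/(2*σ^2)))
        (fun t ht => by simp [hGdef, max_eq_left ht.2])]
      rw [setIntegral_const, Real.volume_real_Ioc_of_le hR.le, sub_zero,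
        smul_eq_mul]
    have h2 : ∫ t in Set.Ioi Rmax, G t ≤ 2 * (σ^2/Rmax) * Real.exp (-(Rmax^2)/(2*σ^2)) := by
      have he : ∫ t in Set.Ioi Rmax, G t = ∫ t in Set.Ioi Rmax, 2 * Real.exp (-(t^2)/(2*σ^2)) := by
        apply setIntegral_congr_fun measurableSet_Ioi
        intro t ht
        simp [hGdef, max_eq_right (le_of_lt (Set.mem_Ioi.mp ht))]
      rw [he, integral_const_mul]
      have := gauss_tail σ Rmax hσ hR
      linarith
    rw [hsplit]
    have : Rmax * (2 * Real.exp (-(Rmax^2)/(2*σ^2))) + 2 * (σ^2/Rmax) * Real.exp (-(Rmax^2)/(2*σ^2))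
        = 2 * Rmax * Real.exp (-(Rmax^2)/(2*σ^2)) * (1 + σ^2/Rmax^2) := by
      field_simp
    linarith [h1, h2]
  -- bound the layer-cake integral
  have hGnn : ∀ t, 0 ≤ G t := fun t => by positivity
  have hstep1 : ∀ t : ℝ, t ∈ Set.Ioi 0 → ν {r : ℝ | t < g r} ≤ ENNReal.ofReal (G t) := by
    intro t ht
    have hSm' : MeasurableSet {r : ℝ | max Rmax t < |r|} :=
      measurableSet_lt measurable_const continuous_abs.measurable
    rw [hsets t ht, hνA _ hSm']
    exact ENNReal.ofReal_le_ofReal (htail (max Rmax t) (le_max_left _ _))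
  have hstep2 : ∫⁻ t in Set.Ioi 0, ν {r : ℝ | t < g r} ≤
      ENNReal.ofReal (∫ t in Set.Ioi 0, G t) := by
    rw [ofReal_integral_eq_lintegral_ofReal hGint
      (ae_restrict_of_ae (Filter.Eventually.of_forall hGnn))]
    exact setLIntegral_mono (hGcont.measurable.ennreal_ofReal) hstep1
  set bound : ℝ := 2 * Rmax * Real.exp (-(Rmax^2)/(2*σ^2)) * (1 + σ^2/Rmax^2) with hbdef
  have hbnn : 0 ≤ bound := by positivity
  have hwd : ∫⁻ r, ENNReal.ofReal (g r) ∂ν = ∫⁻ r, ENNReal.ofReal (q r * g r) := by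
    rw [hν, lintegral_withDensity_eq_lintegral_mul _ hqm.ennreal_ofReal hgm.ennreal_ofReal]
    apply lintegral_congr
    intro r
    rw [Pi.mul_apply, ← ENNReal.ofReal_mul (hqnn r)]
  have hkey : ∫⁻ r, ENNReal.ofReal (q r * g r) ≤ ENNReal.ofReal bound := by
    rw [← hwd, hlayer]
    exact hstep2.trans (ENNReal.ofReal_le_ofReal hGsplit)
  have hhm : Measurable (fun r => q r * g r) := hqm.mul hgm
  have hhnn : ∀ r, 0 ≤ q r * g r := fun r => mul_nonneg (hqnn r) (hgnn r)
  have hint_h : Integrable (fun r => q r * g r) :=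
    ⟨hhm.aestronglyMeasurable,
      (hasFiniteIntegral_iff_ofReal (Filter.Eventually.of_forall hhnn)).mpr
        (lt_of_le_of_lt hkey ENNReal.ofReal_lt_top)⟩
  have hint_val : ∫ r, q r * g r ≤ bound := by
    rw [integral_eq_lintegral_of_nonneg_ae (Filter.Eventually.of_forall hhnn)
      hhm.aestronglyMeasurable]
    exact ENNReal.toReal_le_of_le_ofReal hbnn hkey
  -- identify the tail integral
  have hind : ∀ r, Set.indicator {r : ℝ | Rmax < |r|} (fun r => |r| * p r) r = g r * p r := by
    intro r
    by_cases h : Rmax < |r| <;>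
      simp [Set.indicator, hgdef, h, Set.mem_setOf_eq]
  have htid : ∫ r in {r : ℝ | Rmax < |r|}, |r| * p r = ∫ r, q r * g r := by
    rw [← integral_indicator hSm]
    apply integral_congr_ae
    filter_upwards [hqe] with r hr
    rw [hind r, hr]
    ring
  constructor
  · -- integrability of |r| * p r
    apply Integrable.mono (hint_h.add (hp.const_mul Rmax))
      (continuous_abs.aestronglyMeasurable.mul hp.1)
    filter_upwards [hqe] with r hr
    have h1 : 0 ≤ |r| * p r := mul_nonneg (abs_nonneg r) (hnn r)
    have h2 : 0 ≤ q r * g r + Rmax * p r :=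
      add_nonneg (hhnn r) (mul_nonneg hR.le (hnn r))
    simp only [Pi.add_apply, Pi.mul_apply, Real.norm_eq_abs]
    rw [abs_of_nonneg h1, abs_of_nonneg h2]
    by_cases h : Rmax < |r|
    · have hg : g r = |r| := if_pos h
      have : q r * g r = |r| * p r := by rw [hr, hg]; ring
      nlinarith [mul_nonneg hR.le (hnn r)]
    · push_neg at h
      have := mul_le_mul_of_nonneg_right h (hnn r)
      nlinarith [hhnn r]
  · rw [htid]
    exact hint_val
/-- **L¹ distance of conditional loss densities vs. generalization gap (sub-Gaussian loss).**
`R` is sub-Gaussian with variance proxy `σ²`, `T : Ω → Bool` is the membership indicator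
with both prior probabilities at least `1 - Pm` (where `Pm = max_t P{T = t}`), and
`p0`, `p1` are Lebesgue densities of the conditional laws of `R` given `T = 0` and
`T = 1`.  Then for every `Rmax ≥ √(2σ² log 2)`,
`‖p0 - p1‖₁ ≥ |EG|/Rmax - 2·C(Rmax,σ)/(1 - Pm)` with
`C(Rmax,σ) = exp(-Rmax²/(2σ²))·(1 + σ²/Rmax²)` and
`EG = E[R | T=0] - E[R | T=1]`. -/
theorem subgaussian_l1_density_bound
    {Ω : Type*} [MeasurableSpace Ω] (μ : Measure Ω) [IsProbabilityMeasure μ]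
    (R : Ω → ℝ) (T : Ω → Bool) (hR : Measurable R) (hT : Measurable T)
    (σ : ℝ) (hσ : 0 < σ)
    (htail : ∀ r : ℝ, 0 ≤ r →
      (μ {ω | r ≤ |R ω|}).toReal ≤ 2 * exp (-(r ^ 2) / (2 * σ ^ 2)))
    (Pm : ℝ) (hPm : Pm < 1)
    (hprior : ∀ b : Bool, 1 - Pm ≤ (μ {ω | T ω = b}).toReal)
    (p0 p1 : ℝ → ℝ)
    (hp0nn : ∀ r, 0 ≤ p0 r) (hp1nn : ∀ r, 0 ≤ p1 r)
    (hp0int : Integrable p0) (hp1int : Integrable p1)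
    -- `p0`, `p1` are the densities of the conditional laws of `R` given `T`:
    (hp0 : ∀ A : Set ℝ, MeasurableSet A →
      (μ {ω | R ω ∈ A ∧ T ω = false}).toReal =
        (μ {ω | T ω = false}).toReal * ∫ r in A, p0 r)
    (hp1 : ∀ A : Set ℝ, MeasurableSet A →
      (μ {ω | R ω ∈ A ∧ T ω = true}).toReal =
        (μ {ω | T ω = true}).toReal * ∫ r in A, p1 r)
    (EG : ℝ) (hEG : EG = (∫ r, r * p0 r) - ∫ r, r * p1 r)
    (Rmax : ℝ) (hRmax : Real.sqrt (2 * σ ^ 2 * Real.log 2) ≤ Rmax) :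
    ∫ r, |p0 r - p1 r| ≥
      |EG| / Rmax -
        2 * (exp (-(Rmax ^ 2) / (2 * σ ^ 2)) * (1 + σ ^ 2 / Rmax ^ 2)) / (1 - Pm) := by
  have hRpos : 0 < Rmax := by
    have h2 : 0 < 2 * σ ^ 2 * Real.log 2 := by
      have := Real.log_pos one_lt_two
      positivity
    exact lt_of_lt_of_le (Real.sqrt_pos.mpr h2) hRmax
  have hPm' : 0 < 1 - Pm := by linarith
  set w0 := (μ {ω | T ω = false}).toReal with hw0def
  set w1 := (μ {ω | T ω = true}).toReal with hw1def
  have hw0 : 1 - Pm ≤ w0 := hprior false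
  have hw1 : 1 - Pm ≤ w1 := hprior true
  set q : ℝ → ℝ := fun r => w0 * p0 r + w1 * p1 r with hqdef
  have hqnn : ∀ r, 0 ≤ q r := fun r =>
    add_nonneg (mul_nonneg (by linarith) (hp0nn r)) (mul_nonneg (by linarith) (hp1nn r))
  have hqint : Integrable q := (hp0int.const_mul w0).add (hp1int.const_mul w1)
  -- the measure identity for q
  have hqA : ∀ A : Set ℝ, MeasurableSet A → ∫ r in A, q r = (μ {ω | R ω ∈ A}).toReal := by
    intro A hA
    have hs0 : {ω | R ω ∈ A ∧ T ω = false} = R ⁻¹' A ∩ T ⁻¹' {false} := by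
      ext ω; simp [Set.mem_setOf_eq]
    have hs1 : {ω | R ω ∈ A ∧ T ω = true} = R ⁻¹' A ∩ T ⁻¹' {true} := by
      ext ω; simp [Set.mem_setOf_eq]
    have hm1 : MeasurableSet (R ⁻¹' A ∩ T ⁻¹' {true}) :=
      (hR hA).inter (hT (measurableSet_singleton true))
    have hdisj : Disjoint (R ⁻¹' A ∩ T ⁻¹' {false}) (R ⁻¹' A ∩ T ⁻¹' {true}) := by
      apply Set.disjoint_left.mpr
      rintro ω ⟨-, h0⟩ ⟨-, h1⟩
      simp only [Set.mem_preimage, Set.mem_singleton_iff] at h0 h1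
      rw [h0] at h1; exact Bool.false_ne_true h1
    have hu : (R ⁻¹' A ∩ T ⁻¹' {false}) ∪ (R ⁻¹' A ∩ T ⁻¹' {true}) = R ⁻¹' A := by
      ext ω
      simp only [Set.mem_union, Set.mem_inter_iff, Set.mem_preimage, Set.mem_singleton_iff]
      cases hb : T ω <;> simp [hb]
    have key : (μ {ω | R ω ∈ A ∧ T ω = false}).toReal + (μ {ω | R ω ∈ A ∧ T ω = true}).toReal
        = (μ {ω | R ω ∈ A}).toReal := by
      rw [hs0, hs1, ← ENNReal.toReal_add (measure_ne_top μ _) (measure_ne_top μ _),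
        ← measure_union hdisj hm1, hu]
      rfl
    rw [hqdef]
    simp only
    rw [integral_add ((hp0int.const_mul w0).integrableOn) ((hp1int.const_mul w1).integrableOn),
      integral_const_mul, integral_const_mul, ← hp0 A hA, ← hp1 A hA, key]
  -- tail hypothesis for q
  have htailq : ∀ c : ℝ, Rmax ≤ c →
      ∫ r in {r : ℝ | c < |r|}, q r ≤ 2 * exp (-(c ^ 2) / (2 * σ ^ 2)) := by
    intro c hc
    have hA : MeasurableSet {r : ℝ | c < |r|} :=
      measurableSet_lt measurable_const continuous_abs.measurable
    rw [hqA _ hA]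
    have hsub : {ω | R ω ∈ {r : ℝ | c < |r|}} ⊆ {ω | c ≤ |R ω|} :=
      fun ω h => le_of_lt (show c < |R ω| from h)
    calc (μ {ω | R ω ∈ {r : ℝ | c < |r|}}).toReal
        ≤ (μ {ω | c ≤ |R ω|}).toReal :=
          ENNReal.toReal_mono (measure_ne_top μ _) (measure_mono hsub)
      _ ≤ 2 * exp (-(c ^ 2) / (2 * σ ^ 2)) := htail c (le_trans hRpos.le hc)
  obtain ⟨hTint, hTbd⟩ := tail_moment q hqnn hqint σ Rmax hσ hRpos htailq
  set S : Set ℝ := {r : ℝ | Rmax < |r|} with hSdef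
  have hS : MeasurableSet S := measurableSet_lt measurable_const continuous_abs.measurable
  -- pointwise domination
  have hdom0 : ∀ r, (1 - Pm) * p0 r ≤ q r := by
    intro r
    have h1 := mul_le_mul_of_nonneg_right hw0 (hp0nn r)
    have h2 := mul_nonneg (le_trans hPm'.le hw1) (hp1nn r)
    simp only [hqdef]; nlinarith
  have hdom1 : ∀ r, (1 - Pm) * p1 r ≤ q r := by
    intro r
    have h1 := mul_le_mul_of_nonneg_right hw1 (hp1nn r)
    have h2 := mul_nonneg (le_trans hPm'.le hw0) (hp0nn r)
    simp only [hqdef]; nlinarith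
  -- integrability of r * p_t
  have hint0 : Integrable (fun r => r * p0 r) := by
    apply Integrable.mono' (hTint.const_mul (1 - Pm)⁻¹)
      (continuous_id.aestronglyMeasurable.mul hp0int.1)
    filter_upwards with r
    simp only [Pi.mul_apply, id_eq, Real.norm_eq_abs]
    rw [abs_mul, abs_of_nonneg (hp0nn r), le_inv_mul_iff₀ hPm']
    calc (1 - Pm) * (|r| * p0 r) = |r| * ((1 - Pm) * p0 r) := by ring
      _ ≤ |r| * q r := mul_le_mul_of_nonneg_left (hdom0 r) (abs_nonneg r)
  have hint1 : Integrable (fun r => r * p1 r) := by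
    apply Integrable.mono' (hTint.const_mul (1 - Pm)⁻¹)
      (continuous_id.aestronglyMeasurable.mul hp1int.1)
    filter_upwards with r
    simp only [Pi.mul_apply, id_eq, Real.norm_eq_abs]
    rw [abs_mul, abs_of_nonneg (hp1nn r), le_inv_mul_iff₀ hPm']
    calc (1 - Pm) * (|r| * p1 r) = |r| * ((1 - Pm) * p1 r) := by ring
      _ ≤ |r| * q r := mul_le_mul_of_nonneg_left (hdom1 r) (abs_nonneg r)
  -- splitting of EG
  have hsplit0 := integral_add_compl hS hint0
  have hsplit1 := integral_add_compl hS hint1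
  have hsub : ∫ r in Sᶜ, (r * p0 r - r * p1 r) =
      (∫ r in Sᶜ, r * p0 r) - ∫ r in Sᶜ, r * p1 r :=
    integral_sub hint0.integrableOn hint1.integrableOn
  have hEGsplit : EG = (∫ r in Sᶜ, (r * p0 r - r * p1 r)) +
      ((∫ r in S, r * p0 r) - ∫ r in S, r * p1 r) := by
    rw [hEG, hsub]; linarith
  -- the bulk term
  have hA1 : |∫ r in Sᶜ, (r * p0 r - r * p1 r)| ≤ Rmax * ∫ r, |p0 r - p1 r| := by
    have h1 : |∫ r in Sᶜ, (r * p0 r - r * p1 r)| ≤ ∫ r in Sᶜ, |r * p0 r - r * p1 r| := by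
      simpa [Real.norm_eq_abs] using
        norm_integral_le_integral_norm (μ := volume.restrict Sᶜ)
          (fun r => r * p0 r - r * p1 r)
    have h2 : ∫ r in Sᶜ, |r * p0 r - r * p1 r| ≤ ∫ r in Sᶜ, Rmax * |p0 r - p1 r| := by
      apply setIntegral_mono_on ((hint0.sub hint1).abs.integrableOn)
        (((hp0int.sub hp1int).abs.const_mul Rmax).integrableOn) hS.compl
      intro r hr
      have hr' : |r| ≤ Rmax := not_lt.mp hr
      calc |r * p0 r - r * p1 r| = |r| * |p0 r - p1 r| := by
            rw [← abs_mul]; ring_nf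
        _ ≤ Rmax * |p0 r - p1 r| := mul_le_mul_of_nonneg_right hr' (abs_nonneg _)
    have h3 : ∫ r in Sᶜ, Rmax * |p0 r - p1 r| ≤ ∫ r, Rmax * |p0 r - p1 r| :=
      setIntegral_le_integral ((hp0int.sub hp1int).abs.const_mul Rmax)
        (Filter.Eventually.of_forall fun r => mul_nonneg hRpos.le (abs_nonneg _))
    have h4 : ∫ r, Rmax * |p0 r - p1 r| = Rmax * ∫ r, |p0 r - p1 r| := integral_const_mul _ _
    linarith
  -- the tail terms
  have habs0 : ∀ r, |r * p0 r| = |r| * p0 r := fun r => by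
    rw [abs_mul, abs_of_nonneg (hp0nn r)]
  have habs1 : ∀ r, |r * p1 r| = |r| * p1 r := fun r => by
    rw [abs_mul, abs_of_nonneg (hp1nn r)]
  have hia0 : Integrable (fun r => |r| * p0 r) := by
    have : (fun r => |r| * p0 r) = fun r => |r * p0 r| := funext fun r => (habs0 r).symm
    rw [this]; exact hint0.abs
  have hia1 : Integrable (fun r => |r| * p1 r) := by
    have : (fun r => |r| * p1 r) = fun r => |r * p1 r| := funext fun r => (habs1 r).symm
    rw [this]; exact hint1.abs
  have hB : |∫ r in S, r * p0 r| + |∫ r in S, r * p1 r| ≤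
      (2 * Rmax * exp (-(Rmax ^ 2) / (2 * σ ^ 2)) * (1 + σ ^ 2 / Rmax ^ 2)) / (1 - Pm) := by
    have hB0 : |∫ r in S, r * p0 r| ≤ ∫ r in S, |r| * p0 r := by
      calc |∫ r in S, r * p0 r| ≤ ∫ r in S, |r| * |p0 r| := by
            simpa [Real.norm_eq_abs, abs_mul] using
              norm_integral_le_integral_norm (μ := volume.restrict S) (fun r => r * p0 r)
        _ = ∫ r in S, |r| * p0 r := by
            apply integral_congr_ae
            filter_upwards with r
            rw [abs_of_nonneg (hp0nn r)]
    have hB1 : |∫ r in S, r * p1 r| ≤ ∫ r in S, |r| * p1 r := by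
      calc |∫ r in S, r * p1 r| ≤ ∫ r in S, |r| * |p1 r| := by
            simpa [Real.norm_eq_abs, abs_mul] using
              norm_integral_le_integral_norm (μ := volume.restrict S) (fun r => r * p1 r)
        _ = ∫ r in S, |r| * p1 r := by
            apply integral_congr_ae
            filter_upwards with r
            rw [abs_of_nonneg (hp1nn r)]
    have hsum : (∫ r in S, |r| * p0 r) + ∫ r in S, |r| * p1 r =
        ∫ r in S, (|r| * p0 r + |r| * p1 r) :=
      (integral_add hia0.integrableOn hia1.integrableOn).symm
    have hmono : ∫ r in S, (|r| * p0 r + |r| * p1 r) ≤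
        ∫ r in S, (1 - Pm)⁻¹ * (|r| * q r) := by
      apply setIntegral_mono_on (hia0.integrableOn.add hia1.integrableOn)
        ((hTint.const_mul (1 - Pm)⁻¹).integrableOn) hS
      intro r _
      simp only [Pi.add_apply]
      rw [le_inv_mul_iff₀ hPm']
      have e : |r| * q r = |r| * (w0 * p0 r) + |r| * (w1 * p1 r) := by
        simp only [hqdef]; ring
      have a0 : (1 - Pm) * p0 r ≤ w0 * p0 r := mul_le_mul_of_nonneg_right hw0 (hp0nn r)
      have a1 : (1 - Pm) * p1 r ≤ w1 * p1 r := mul_le_mul_of_nonneg_right hw1 (hp1nn r)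
      have b0 : |r| * ((1 - Pm) * p0 r) ≤ |r| * (w0 * p0 r) :=
        mul_le_mul_of_nonneg_left a0 (abs_nonneg r)
      have b1 : |r| * ((1 - Pm) * p1 r) ≤ |r| * (w1 * p1 r) :=
        mul_le_mul_of_nonneg_left a1 (abs_nonneg r)
      have lhs_eq : (1 - Pm) * (|r| * p0 r + |r| * p1 r) =
          |r| * ((1 - Pm) * p0 r) + |r| * ((1 - Pm) * p1 r) := by ring
      linarith
    have hval : ∫ r in S, (1 - Pm)⁻¹ * (|r| * q r) = (1 - Pm)⁻¹ * ∫ r in S, |r| * q r :=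
      integral_const_mul _ _
    have hlast : (1 - Pm)⁻¹ * ∫ r in S, |r| * q r ≤
        (1 - Pm)⁻¹ * (2 * Rmax * exp (-(Rmax ^ 2) / (2 * σ ^ 2)) * (1 + σ ^ 2 / Rmax ^ 2)) := by
      apply mul_le_mul_of_nonneg_left _ (by positivity)
      convert hTbd using 2 <;> ring
    rw [div_eq_inv_mul]
    linarith
  -- put everything together
  have hfinal : |EG| ≤ Rmax * (∫ r, |p0 r - p1 r|) +
      Rmax * (2 * (exp (-(Rmax ^ 2) / (2 * σ ^ 2)) * (1 + σ ^ 2 / Rmax ^ 2)) / (1 - Pm)) := by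
    have htri : |EG| ≤ |∫ r in Sᶜ, (r * p0 r - r * p1 r)| +
        (|∫ r in S, r * p0 r| + |∫ r in S, r * p1 r|) := by
      rw [hEGsplit]
      calc |(∫ r in Sᶜ, (r * p0 r - r * p1 r)) +
          ((∫ r in S, r * p0 r) - ∫ r in S, r * p1 r)|
          ≤ |∫ r in Sᶜ, (r * p0 r - r * p1 r)| +
            |(∫ r in S, r * p0 r) - ∫ r in S, r * p1 r| := abs_add_le _ _
        _ ≤ _ := by
            have := abs_sub (∫ r in S, r * p0 r) (∫ r in S, r * p1 r)
            linarith
    have heq : (2 * Rmax * exp (-(Rmax ^ 2) / (2 * σ ^ 2)) * (1 + σ ^ 2 / Rmax ^ 2)) / (1 - Pm)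
        = Rmax * (2 * (exp (-(Rmax ^ 2) / (2 * σ ^ 2)) * (1 + σ ^ 2 / Rmax ^ 2)) / (1 - Pm)) := by
      ring
    linarith
  rw [ge_iff_le, sub_le_iff_le_add, div_le_iff₀ hRpos]
  have hring : ((∫ r, |p0 r - p1 r|) +
      2 * (exp (-(Rmax ^ 2) / (2 * σ ^ 2)) * (1 + σ ^ 2 / Rmax ^ 2)) / (1 - Pm)) * Rmax =
      Rmax * (∫ r, |p0 r - p1 r|) +
      Rmax * (2 * (exp (-(Rmax ^ 2) / (2 * σ ^ 2)) * (1 + σ ^ 2 / Rmax ^ 2)) / (1 - Pm)) := by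
    ring
  linarith [hfinal, hring]
end

section
/- There exists a membership inference problem with arbitrarily small generalization gap but perfect attack success: for any D > ε > 0, define the loss under membership (T=1) to be R = 0 almost surely, and under non-membership (T=0) to have density p_{R|T=0}(r) = (1/ε)Λ((r−D)/ε) with Λ(r) = max(1−|r|, 0). Then (a) the generalization gap |E[R|T=0] − E[R|T=1]| equals D, and (b) the attacker φ(r) = 1{r = 0} satisfies P{φ(R) = T} = 1. -/
open MeasureTheory

open scoped ENNReal NNReal

lemma aux_poly_int (a b x y : ℝ) : ∫ r in x..y, (a*r^2 + b*r)
    = a*(y^3-x^3)/3 + b*(y^2-x^2)/2 := by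
  have h1 : IntervalIntegrable (fun r : ℝ => a * r^2) volume x y :=
    (continuous_const.mul (continuous_pow 2)).intervalIntegrable _ _
  have h2 : IntervalIntegrable (fun r : ℝ => b * r) volume x y :=
    (continuous_const.mul continuous_id).intervalIntegrable _ _
  rw [intervalIntegral.integral_add h1 h2, intervalIntegral.integral_const_mul,
    intervalIntegral.integral_const_mul, integral_id, integral_pow]
  norm_num
  ring

lemma aux_tri_cont (D ε : ℝ) :
    Continuous fun r : ℝ => (1 / ε) * max (1 - |(r - D) / ε|) 0 := by fun_prop

lemma aux_tri_supp (D ε : ℝ) (hε : 0 < ε) (r : ℝ) (hr : r ∉ Set.Icc (D - ε) (D + ε)) :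
    (1 / ε) * max (1 - |(r - D) / ε|) 0 = 0 := by
  have h1 : (1 : ℝ) ≤ |(r - D) / ε| := by
    rw [abs_div, abs_of_pos hε, le_div_iff₀ hε, one_mul]
    simp only [Set.mem_Icc, not_and_or, not_le] at hr
    rcases hr with h | h
    · rw [abs_of_neg (by linarith)]; linarith
    · rw [abs_of_pos (by linarith)]; linarith
  rw [max_eq_right (by linarith), mul_zero]

lemma aux_tri_integrable (D ε : ℝ) (hε : 0 < ε) :
    Integrable (fun r : ℝ => (1 / ε) * max (1 - |(r - D) / ε|) 0) :=
  (aux_tri_cont D ε).integrable_of_hasCompactSupport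
    (HasCompactSupport.intro isCompact_Icc (aux_tri_supp D ε hε))

lemma aux_tri_nonneg (D ε : ℝ) (hε : 0 < ε) (r : ℝ) :
    0 ≤ (1 / ε) * max (1 - |(r - D) / ε|) 0 := by positivity

lemma aux_tri_moment (D ε : ℝ) (hε : 0 < ε) :
    ∫ r : ℝ, r * ((1 / ε) * max (1 - |(r - D) / ε|) 0) = D := by
  have hne : ε ≠ 0 := ne_of_gt hε
  have hsupp : ∀ r ∉ Set.Icc (D - ε) (D + ε),
      r * ((1 / ε) * max (1 - |(r - D) / ε|) 0) = 0 := by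
    intro r hr; rw [aux_tri_supp D ε hε r hr, mul_zero]
  rw [← setIntegral_eq_integral_of_forall_compl_eq_zero hsupp,
    integral_Icc_eq_integral_Ioc,
    ← intervalIntegral.integral_of_le (by linarith)]
  have hcont : Continuous fun r : ℝ => r * ((1 / ε) * max (1 - |(r - D) / ε|) 0) :=
    continuous_id.mul (aux_tri_cont D ε)
  have hsplit := intervalIntegral.integral_add_adjacent_intervals
    (a := D - ε) (b := D) (c := D + ε)
    (f := fun r : ℝ => r * ((1 / ε) * max (1 - |(r - D) / ε|) 0)) (μ := volume)
    (hcont.intervalIntegrable _ _) (hcont.intervalIntegrable _ _)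
  rw [← hsplit]
  have h1 : ∫ r in (D - ε)..D, r * ((1 / ε) * max (1 - |(r - D) / ε|) 0)
      = ∫ r in (D - ε)..D, ((1/ε^2) * r^2 + (1/ε - D/ε^2) * r) := by
    apply intervalIntegral.integral_congr
    intro r hr
    rw [Set.uIcc_of_le (by linarith)] at hr
    obtain ⟨hl, hu⟩ := hr
    simp only
    have habs : |(r - D) / ε| = (D - r) / ε := by
      rw [abs_div, abs_of_pos hε, abs_of_nonpos (by linarith)]; ring
    rw [habs, max_eq_left (by rw [sub_nonneg, div_le_one hε]; linarith)]
    field_simp; ring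
  have h2 : ∫ r in D..(D + ε), r * ((1 / ε) * max (1 - |(r - D) / ε|) 0)
      = ∫ r in D..(D + ε), (-(1/ε^2) * r^2 + (1/ε + D/ε^2) * r) := by
    apply intervalIntegral.integral_congr
    intro r hr
    rw [Set.uIcc_of_le (by linarith)] at hr
    obtain ⟨hl, hu⟩ := hr
    simp only
    have habs : |(r - D) / ε| = (r - D) / ε := by
      rw [abs_div, abs_of_pos hε, abs_of_nonneg (by linarith)]
    rw [habs, max_eq_left (by rw [sub_nonneg, div_le_one hε]; linarith)]
    field_simp; ring
  rw [h1, h2, aux_poly_int, aux_poly_int]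
  field_simp
  ring

lemma aux_mean0 {Ω : Type*} [MeasurableSpace Ω] (μ : Measure Ω) [IsProbabilityMeasure μ]
    (T : Ω → Bool) (R : Ω → ℝ) (hT : Measurable T) (hR : Measurable R)
    (D ε : ℝ) (hε : 0 < ε)
    (hR0 : ∀ A : Set ℝ, MeasurableSet A →
      (μ {ω | R ω ∈ A ∧ T ω = false}).toReal =
        (μ {ω | T ω = false}).toReal *
          ∫ r in A, (1 / ε) * max (1 - |(r - D) / ε|) 0) :
    (∫ ω in {ω | T ω = false}, R ω ∂μ) = (μ {ω | T ω = false}).toReal * D := by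
  have htm := aux_tri_moment D ε hε
  set g : ℝ → ℝ := fun r => (1 / ε) * max (1 - |(r - D) / ε|) 0 with hg
  set s0 : Set Ω := {ω | T ω = false} with hs0def
  have hs0 : MeasurableSet s0 := hT (measurableSet_singleton false)
  set c : ℝ := (μ s0).toReal with hc
  have hc0 : 0 ≤ c := ENNReal.toReal_nonneg
  have hgint : Integrable g := aux_tri_integrable D ε hε
  have hgmeas : Measurable g := (aux_tri_cont D ε).measurable
  set ν : Measure ℝ := Measure.map R (μ.restrict s0) with hν
  set ρ : Measure ℝ := (ENNReal.ofReal c) •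
    (volume.withDensity fun r => ENNReal.ofReal (g r)) with hρ
  have hνA : ∀ A : Set ℝ, MeasurableSet A → ν A = μ {ω | R ω ∈ A ∧ T ω = false} := by
    intro A hA
    rw [hν, Measure.map_apply hR hA, Measure.restrict_apply (hR hA)]
    rfl
  have hlA : ∀ A : Set ℝ, MeasurableSet A →
      ∫⁻ r in A, ENNReal.ofReal (g r) = ENNReal.ofReal (∫ r in A, g r) := by
    intro A hA
    rw [MeasureTheory.ofReal_integral_eq_lintegral_ofReal (hgint.integrableOn)
      (Filter.Eventually.of_forall fun r => aux_tri_nonneg D ε hε r)]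
  have hρA : ∀ A : Set ℝ, MeasurableSet A →
      ρ A = ENNReal.ofReal (c * ∫ r in A, g r) := by
    intro A hA
    rw [hρ, Measure.smul_apply, withDensity_apply _ hA, smul_eq_mul, hlA A hA,
      ENNReal.ofReal_mul hc0]
  have hνρ : ν = ρ := by
    apply Measure.ext
    intro A hA
    rw [hρA A hA]
    have h1 : (ν A).toReal = c * ∫ r in A, g r := by
      rw [hνA A hA]; exact hR0 A hA
    have h2 : ν A ≠ ⊤ := by
      rw [hνA A hA]; exact measure_ne_top μ _
    rw [← h1, ENNReal.ofReal_toReal h2]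
  have hmap : (∫ ω in s0, R ω ∂μ) = ∫ r : ℝ, r ∂ν := by
    rw [hν]
    exact (integral_map hR.aemeasurable aestronglyMeasurable_id).symm
  have hwd : (∫ r : ℝ, r ∂(volume.withDensity fun r => ENNReal.ofReal (g r)))
      = ∫ r : ℝ, r * g r := by
    have hmeas : Measurable fun r => (g r).toNNReal :=
      measurable_real_toNNReal.comp hgmeas
    have : (fun r => ENNReal.ofReal (g r)) = fun r => ((g r).toNNReal : ℝ≥0∞) := rfl
    rw [this, integral_withDensity_eq_integral_smul hmeas]
    congr 1
    ext r
    rw [NNReal.smul_def, smul_eq_mul, Real.coe_toNNReal _ (aux_tri_nonneg D ε hε r),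
      mul_comm]
  have htm' : ∫ r : ℝ, r * g r = D := htm
  rw [hmap, hνρ, hρ, integral_smul_measure, ENNReal.toReal_ofReal hc0, hwd, htm',
    smul_eq_mul]

/-- **Good generalization does not prevent successful attacks (counterexample).**
`T` is the membership indicator (both values have positive probability).  Given `T = 1`
(`true`), the loss `R` is `0` a.s.; given `T = 0` (`false`), `R` has the triangular
density `r ↦ (1/ε)·Λ((r - D)/ε)` with `Λ(r) = max(1 - |r|, 0)` and `0 < ε < D`.
Then (a) the generalization gap `|E[R|T=0] - E[R|T=1]|` equals `D`, and
(b) the attacker predicting membership iff `R = 0` succeeds with probability one. -/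
theorem generalization_does_not_imply_privacy
    {Ω : Type*} [MeasurableSpace Ω] (μ : Measure Ω) [IsProbabilityMeasure μ]
    (T : Ω → Bool) (R : Ω → ℝ) (hT : Measurable T) (hR : Measurable R)
    (D ε : ℝ) (hε : 0 < ε) (hεD : ε < D)
    (h0pos : 0 < μ {ω | T ω = false}) (h1pos : 0 < μ {ω | T ω = true})
    -- given membership (`T = 1`), the loss is zero a.s.:
    (hR1 : μ {ω | R ω = 0 ∧ T ω = true} = μ {ω | T ω = true})
    -- given non-membership (`T = 0`), the loss has the triangular density:
    (hR0 : ∀ A : Set ℝ, MeasurableSet A →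
      (μ {ω | R ω ∈ A ∧ T ω = false}).toReal =
        (μ {ω | T ω = false}).toReal *
          ∫ r in A, (1 / ε) * max (1 - |(r - D) / ε|) 0) :
    |(∫ ω in {ω | T ω = false}, R ω ∂μ) / (μ {ω | T ω = false}).toReal -
        (∫ ω in {ω | T ω = true}, R ω ∂μ) / (μ {ω | T ω = true}).toReal| = D ∧
      μ {ω | (R ω = 0 ↔ T ω = true)} = 1 := by
  have hD : 0 < D := lt_trans hε hεD
  set s1 : Set Ω := {ω | T ω = true} with hs1def
  set s0 : Set Ω := {ω | T ω = false} with hs0def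
  have hs1 : MeasurableSet s1 := hT (measurableSet_singleton true)
  have hB : MeasurableSet {ω | R ω = 0 ∧ T ω = true} :=
    (hR (measurableSet_singleton 0)).inter hs1
  -- μ (s1 \ B) = 0
  have hBsub : {ω | R ω = 0 ∧ T ω = true} ⊆ s1 := fun ω hω => hω.2
  have hdiff : μ (s1 \ {ω | R ω = 0 ∧ T ω = true}) = 0 := by
    rw [measure_diff hBsub hB.nullMeasurableSet (measure_ne_top μ _), hR1, tsub_self]
  -- μ {R = 0 ∧ T = false} = 0
  have hzero0 : μ {ω | R ω = 0 ∧ T ω = false} = 0 := by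
    have h := hR0 {0} (measurableSet_singleton 0)
    have hres : (volume.restrict ({0} : Set ℝ)) = 0 :=
      Measure.restrict_eq_zero.mpr Real.volume_singleton
    rw [hres, integral_zero_measure, mul_zero] at h
    have := (ENNReal.toReal_eq_zero_iff _).mp h
    rcases this with h' | h'
    · exact h'
    · exact absurd h' (measure_ne_top μ _)
  -- part (b)
  have hcompl : {ω | (R ω = 0 ↔ T ω = true)}ᶜ ⊆
      {ω | R ω = 0 ∧ T ω = false} ∪ (s1 \ {ω | R ω = 0 ∧ T ω = true}) := by
    intro ω hω
    simp only [Set.mem_compl_iff, Set.mem_setOf_eq] at hω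
    by_cases hr : R ω = 0
    · rcases Bool.eq_false_or_eq_true (T ω) with hTw | hTw
      · exact absurd (iff_of_true hr hTw) hω
      · exact Or.inl ⟨hr, hTw⟩
    · rcases Bool.eq_false_or_eq_true (T ω) with hTw | hTw
      · exact Or.inr ⟨hTw, fun hc => hr hc.1⟩
      · exact absurd (iff_of_false hr (by simp [hTw])) hω
  have hScompl : μ ({ω | (R ω = 0 ↔ T ω = true)}ᶜ) = 0 :=
    measure_mono_null hcompl (measure_union_null hzero0 hdiff)
  have hSmeas : MeasurableSet {ω | (R ω = 0 ↔ T ω = true)} := by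
    have : {ω | (R ω = 0 ↔ T ω = true)} =
        ({ω | R ω = 0 ∧ T ω = true}) ∪ ({ω | R ω = 0}ᶜ ∩ s1ᶜ) := by
      ext ω
      simp only [Set.mem_setOf_eq, Set.mem_union, Set.mem_inter_iff, Set.mem_compl_iff,
        hs1def]
      constructor
      · intro h
        by_cases hr : R ω = 0
        · exact Or.inl ⟨hr, h.mp hr⟩
        · exact Or.inr ⟨hr, fun ht => hr (h.mpr ht)⟩
      · rintro (⟨h1, h2⟩ | ⟨h1, h2⟩)
        · exact ⟨fun _ => h2, fun _ => h1⟩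
        · exact ⟨fun hr => absurd hr h1, fun ht => absurd ht h2⟩
    rw [this]
    exact hB.union (((hR (measurableSet_singleton 0)).compl).inter hs1.compl)
  have hpartb : μ {ω | (R ω = 0 ↔ T ω = true)} = 1 := by
    have hmc := measure_compl hSmeas (measure_ne_top μ _)
    rw [hScompl, measure_univ] at hmc
    have hle : (1 : ℝ≥0∞) ≤ μ {ω | (R ω = 0 ↔ T ω = true)} :=
      tsub_eq_zero_iff_le.mp hmc.symm
    exact le_antisymm prob_le_one hle
  -- part (a)
  have hE0 : (∫ ω in s0, R ω ∂μ) = (μ s0).toReal * D :=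
    aux_mean0 μ T R hT hR D ε hε hR0
  have hae : ∀ᵐ ω ∂μ, ω ∈ s1 → R ω = 0 := by
    rw [ae_iff]
    refine measure_mono_null (fun ω hω => ?_) hdiff
    rw [Set.mem_setOf_eq, Classical.not_imp] at hω
    exact ⟨hω.1, fun hc => hω.2 hc.1⟩
  have hE1 : (∫ ω in s1, R ω ∂μ) = 0 := by
    rw [setIntegral_congr_ae hs1 (hae.mono fun ω h hmem => h hmem)]
    exact integral_zero _ _
  have hc0pos : (0:ℝ) < (μ s0).toReal := ENNReal.toReal_pos h0pos.ne' (measure_ne_top μ _)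
  refine ⟨?_, hpartb⟩
  rw [hE0, hE1, zero_div, sub_zero, mul_comm, mul_div_assoc,
    div_self (ne_of_gt hc0pos), mul_one]
  exact abs_of_pos hD
end

section
/- Let T be a random variable on a finite set 𝒯 jointly distributed with (Θ̂, S). Let φ* be the Bayes attacker with success probability P_Suc = E[max_t P(T=t | Θ̂, S)]. Then the conditional mutual information satisfies I(T; Θ̂ | S) ≥ d_KL( P_Suc ‖ E[max_t P(T=t | S)] ), where d_KL(p‖q) = p log(p/q) + (1−p) log((1−p)/(1−q)) is the binary KL divergence. -/
open Real


/-- Log-sum inequality. -/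
lemma logSum_aux {ι : Type*} (s : Finset ι) (a b : ι → ℝ)
    (ha : ∀ i ∈ s, 0 ≤ a i) (hb : ∀ i ∈ s, 0 ≤ b i)
    (hab : ∀ i ∈ s, b i = 0 → a i = 0) :
    (∑ i ∈ s, a i) * Real.log ((∑ i ∈ s, a i) / (∑ i ∈ s, b i)) ≤
      ∑ i ∈ s, a i * Real.log (a i / b i) := by
  set A := ∑ i ∈ s, a i with hA
  set B := ∑ i ∈ s, b i with hB
  by_cases hA0 : A = 0
  · have hall : ∀ i ∈ s, a i = 0 := (Finset.sum_eq_zero_iff_of_nonneg ha).1 (hA ▸ hA0)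
    rw [hA0]
    simp only [zero_mul]
    refine Finset.sum_nonneg fun i hi => ?_
    rw [hall i hi]; simp
  have hApos : 0 < A := lt_of_le_of_ne (Finset.sum_nonneg ha) (Ne.symm hA0)
  by_cases hB0 : B = 0
  · exfalso
    have hballz := (Finset.sum_eq_zero_iff_of_nonneg hb).1 hB0
    have : ∀ i ∈ s, a i = 0 := fun i hi => hab i hi (hballz i hi)
    exact hA0 (Finset.sum_eq_zero this)
  have hBpos : 0 < B := lt_of_le_of_ne (Finset.sum_nonneg hb) (Ne.symm hB0)
  have key : ∀ i ∈ s, a i * Real.log (A / B) + (a i - b i * (A / B)) ≤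
      a i * Real.log (a i / b i) := by
    intro i hi
    rcases eq_or_lt_of_le (ha i hi) with h0 | hpos
    · rw [← h0]
      have : 0 ≤ b i * (A / B) := mul_nonneg (hb i hi) (by positivity)
      nlinarith
    · have hbpos : 0 < b i := by
        rcases eq_or_lt_of_le (hb i hi) with h0' | h' 
        · exact absurd (hab i hi h0'.symm) (ne_of_gt hpos)
        · exact h'
      have hlog : Real.log (A * b i / (B * a i)) ≤ A * b i / (B * a i) - 1 :=
        Real.log_le_sub_one_of_pos (by positivity)
      have hsplit : Real.log (a i / b i) - Real.log (A / B) =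
          -Real.log (A * b i / (B * a i)) := by
        rw [Real.log_div (ne_of_gt hpos) (ne_of_gt hbpos),
          Real.log_div (ne_of_gt hApos) (ne_of_gt hBpos),
          Real.log_div (by positivity) (by positivity),
          Real.log_mul (ne_of_gt hApos) (ne_of_gt hbpos),
          Real.log_mul (ne_of_gt hBpos) (ne_of_gt hpos)]
        ring
      have hfrac : a i * (A * b i / (B * a i)) = b i * (A / B) := by
        field_simp
      nlinarith [mul_le_mul_of_nonneg_left hlog (le_of_lt hpos)]
  calc A * Real.log (A / B)
      = ∑ i ∈ s, (a i * Real.log (A / B) + (a i - b i * (A / B))) := by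
        rw [Finset.sum_add_distrib, ← Finset.sum_mul, Finset.sum_sub_distrib,
          ← Finset.sum_mul, ← hA, ← hB]
        field_simp; ring
    _ ≤ ∑ i ∈ s, a i * Real.log (a i / b i) := Finset.sum_le_sum key

/-- monotonicity of binary KL in the second argument on `(0, P]`. -/
lemma klMono_aux (P x y : ℝ) (hP1 : P ≤ 1) (hx : 0 < x) (hxy : x ≤ y) (hyP : y ≤ P) :
    P * Real.log (P / y) + (1 - P) * Real.log ((1 - P) / (1 - y)) ≤
      P * Real.log (P / x) + (1 - P) * Real.log ((1 - P) / (1 - x)) := by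
  have hy : 0 < y := lt_of_lt_of_le hx hxy
  have hP0 : 0 < P := lt_of_lt_of_le hy hyP
  have hy1 : y ≤ 1 := hyP.trans hP1
  rcases eq_or_lt_of_le hy1 with hy1' | hy1'
  · -- y = 1 forces P = 1
    have hPeq : P = 1 := le_antisymm hP1 (hy1' ▸ hyP)
    have hx1 : x ≤ 1 := hxy.trans hy1
    rw [hPeq, hy1']
    simp only [sub_self, zero_mul, add_zero, one_mul, div_one]
    rw [Real.log_one]
    have : 0 ≤ Real.log (1 / x) := Real.log_nonneg (one_le_one_div hx hx1)
    linarith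
  · have h1y : 0 < 1 - y := by linarith
    have h1x : 0 < 1 - x := by linarith
    have h1 : (y - x) / y ≤ Real.log y - Real.log x := by
      have := Real.log_le_sub_one_of_pos (show 0 < x / y by positivity)
      rw [Real.log_div (ne_of_gt hx) (ne_of_gt hy)] at this
      have h2 : x / y - 1 = -((y - x) / y) := by field_simp; ring
      linarith
    have h2 : Real.log (1 - x) - Real.log (1 - y) ≤ (y - x) / (1 - y) := by
      have := Real.log_le_sub_one_of_pos (show 0 < (1 - x) / (1 - y) by positivity)
      rw [Real.log_div (ne_of_gt h1x) (ne_of_gt h1y)] at this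
      have h3 : (1 - x) / (1 - y) - 1 = (y - x) / (1 - y) := by field_simp; ring
      linarith
    have hcore : (1 - P) * (Real.log (1 - x) - Real.log (1 - y)) ≤
        P * (Real.log y - Real.log x) := by
      have e1 : (1 - P) * (Real.log (1 - x) - Real.log (1 - y)) ≤ (1 - P) * ((y - x) / (1 - y)) :=
        mul_le_mul_of_nonneg_left h2 (by linarith)
      have e2 : P * ((y - x) / y) ≤ P * (Real.log y - Real.log x) :=
        mul_le_mul_of_nonneg_left h1 (le_of_lt hP0)
      have e3 : (1 - P) * ((y - x) / (1 - y)) ≤ P * ((y - x) / y) := by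
        rw [← mul_div_assoc, ← mul_div_assoc, div_le_div_iff₀ h1y hy]
        nlinarith
      linarith
    rcases eq_or_lt_of_le hP1 with hPeq | hPlt
    · rw [hPeq]
      simp only [sub_self, zero_mul, add_zero, one_mul]
      rw [Real.log_div one_ne_zero (ne_of_gt hy), Real.log_div one_ne_zero (ne_of_gt hx)]
      have := Real.log_le_log hx hxy
      linarith
    · have h1P : 0 < 1 - P := by linarith
      rw [Real.log_div (ne_of_gt hP0) (ne_of_gt hy), Real.log_div (ne_of_gt hP0) (ne_of_gt hx),
        Real.log_div (ne_of_gt h1P) (ne_of_gt h1y), Real.log_div (ne_of_gt h1P) (ne_of_gt h1x)]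
      nlinarith [hcore]

/-- **Mutual information bound on the Bayes attacker (discrete case).**
`p t θ s` is the joint pmf of the sensitive attribute `T` (finite valued), the model
parameters `Θ̂` and the side information `S`.  The success probability of the Bayes
attacker is `PSuc = E[max_t P(T=t | Θ̂, S)] = ∑_{θ,s} max_t p(t,θ,s)`, and
`Qprior = E[max_t P(T=t | S)] = ∑_s max_t p(t,s)`.  Then the conditional mutual
information `I(T; Θ̂ | S)` is at least the binary KL divergence
`d_KL(PSuc ‖ Qprior)`. -/
theorem mutual_information_bounds_bayes_attacker
    {𝒯 Θ 𝒮 : Type*} [Fintype 𝒯] [Fintype Θ] [Fintype 𝒮]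
    [Nonempty 𝒯] [Nonempty Θ] [Nonempty 𝒮]
    (p : 𝒯 → Θ → 𝒮 → ℝ)
    (hnn : ∀ t θ s, 0 ≤ p t θ s)
    (hsum : ∑ t : 𝒯, ∑ θ : Θ, ∑ s : 𝒮, p t θ s = 1)
    (PSuc Qprior : ℝ)
    (hPSuc : PSuc = ∑ θ : Θ, ∑ s : 𝒮, ⨆ t : 𝒯, p t θ s)
    (hQprior : Qprior = ∑ s : 𝒮, ⨆ t : 𝒯, ∑ θ : Θ, p t θ s) :
    -- I(T; Θ̂ | S)
    (∑ t : 𝒯, ∑ θ : Θ, ∑ s : 𝒮,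
        p t θ s * log (p t θ s * (∑ t' : 𝒯, ∑ θ' : Θ, p t' θ' s) /
          ((∑ θ' : Θ, p t θ' s) * (∑ t' : 𝒯, p t' θ s)))) ≥
      PSuc * log (PSuc / Qprior) + (1 - PSuc) * log ((1 - PSuc) / (1 - Qprior)) := by
  classical
  -- marginals
  set q : 𝒯 → 𝒮 → ℝ := fun t s => ∑ θ : Θ, p t θ s with hqdef
  set r : Θ → 𝒮 → ℝ := fun θ s => ∑ t : 𝒯, p t θ s with hrdef
  set m : 𝒮 → ℝ := fun s => ∑ t : 𝒯, ∑ θ : Θ, p t θ s with hmdef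
  have hqnn : ∀ t s, 0 ≤ q t s := fun t s => Finset.sum_nonneg fun θ _ => hnn t θ s
  have hrnn : ∀ θ s, 0 ≤ r θ s := fun θ s => Finset.sum_nonneg fun t _ => hnn t θ s
  have hmnn : ∀ s, 0 ≤ m s := fun s => Finset.sum_nonneg fun t _ => hqnn t s
  have hp_le_q : ∀ t θ s, p t θ s ≤ q t s := fun t θ s =>
    Finset.single_le_sum (fun θ' _ => hnn t θ' s) (Finset.mem_univ θ)
  have hp_le_r : ∀ t θ s, p t θ s ≤ r θ s := fun t θ s =>
    Finset.single_le_sum (fun t' _ => hnn t' θ s) (Finset.mem_univ t)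
  have hq_le_m : ∀ t s, q t s ≤ m s := fun t s =>
    Finset.single_le_sum (fun t' _ => hqnn t' s) (Finset.mem_univ t)
  have hm_eq : ∀ s, m s = ∑ θ : Θ, r θ s := fun s => Finset.sum_comm
  have hr_le_m : ∀ θ s, r θ s ≤ m s := fun θ s => by
    rw [hm_eq]
    exact Finset.single_le_sum (fun θ' _ => hrnn θ' s) (Finset.mem_univ θ)
  -- argmax chooser
  have hargmax : ∀ θ s, ∃ t : 𝒯, (⨆ t' : 𝒯, p t' θ s) = p t θ s := by
    intro θ s
    obtain ⟨t, ht⟩ := Finite.exists_max (fun t => p t θ s)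
    exact ⟨t, le_antisymm (ciSup_le ht) (le_ciSup (Finite.bddAbove_range (fun t' => p t' θ s)) t)⟩
  choose φ hφ using hargmax
  -- joint and product measures on the product type
  set μ : 𝒯 × Θ × 𝒮 → ℝ := fun x => p x.1 x.2.1 x.2.2 with hμdef
  set ν : 𝒯 × Θ × 𝒮 → ℝ := fun x => q x.1 x.2.2 * r x.2.1 x.2.2 / m x.2.2 with hνdef
  have hμnn : ∀ x, 0 ≤ μ x := fun x => hnn _ _ _
  have hνnn : ∀ x, 0 ≤ ν x := fun x => by
    have := hqnn x.1 x.2.2; have := hrnn x.2.1 x.2.2; have := hmnn x.2.2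
    positivity
  have hac : ∀ x, ν x = 0 → μ x = 0 := by
    intro x hx
    by_contra h
    have hμpos : 0 < μ x := lt_of_le_of_ne (hμnn x) (Ne.symm h)
    have h1 : 0 < q x.1 x.2.2 := lt_of_lt_of_le hμpos (hp_le_q _ _ _)
    have h2 : 0 < r x.2.1 x.2.2 := lt_of_lt_of_le hμpos (hp_le_r _ _ _)
    have h3 : 0 < m x.2.2 := lt_of_lt_of_le h1 (hq_le_m _ _)
    have : 0 < ν x := by rw [hνdef]; positivity
    exact absurd hx (ne_of_gt this)
  -- rewrite the LHS
  have hLHS : (∑ t : 𝒯, ∑ θ : Θ, ∑ s : 𝒮,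
        p t θ s * log (p t θ s * (∑ t' : 𝒯, ∑ θ' : Θ, p t' θ' s) /
          ((∑ θ' : Θ, p t θ' s) * (∑ t' : 𝒯, p t' θ s)))) =
      ∑ x : 𝒯 × Θ × 𝒮, μ x * log (μ x / ν x) := by
    rw [Fintype.sum_prod_type]
    refine Finset.sum_congr rfl fun t _ => ?_
    rw [Fintype.sum_prod_type]
    refine Finset.sum_congr rfl fun θ _ => Finset.sum_congr rfl fun s _ => ?_
    congr 1
    rw [hνdef]
    simp only [hμdef]
    rw [div_div_eq_mul_div]
  -- the Bayes decision set
  set A : Finset (𝒯 × Θ × 𝒮) := Finset.univ.filter (fun x => x.1 = φ x.2.1 x.2.2) with hAdef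
  -- total masses
  have hstot : ∑ s : 𝒮, m s = 1 := by
    rw [← hsum, Finset.sum_comm]
    exact Finset.sum_congr rfl fun t _ => Finset.sum_comm
  have hμtot : ∑ x : 𝒯 × Θ × 𝒮, μ x = 1 := by
    rw [Fintype.sum_prod_type]
    simp only [Fintype.sum_prod_type]
    exact hsum
  have hμA : ∑ x ∈ A, μ x = PSuc := by
    rw [hAdef, Finset.sum_filter, Fintype.sum_prod_type]
    simp only [Fintype.sum_prod_type]
    calc ∑ t : 𝒯, ∑ θ : Θ, ∑ s : 𝒮, (if t = φ θ s then p t θ s else 0)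
        = ∑ θ : Θ, ∑ t : 𝒯, ∑ s : 𝒮, (if t = φ θ s then p t θ s else 0) :=
          Finset.sum_comm
      _ = ∑ θ : Θ, ∑ s : 𝒮, ∑ t : 𝒯, (if t = φ θ s then p t θ s else 0) :=
          Finset.sum_congr rfl fun θ _ => Finset.sum_comm
      _ = ∑ θ : Θ, ∑ s : 𝒮, p (φ θ s) θ s := by
          refine Finset.sum_congr rfl fun θ _ => Finset.sum_congr rfl fun s _ => ?_
          rw [Finset.sum_ite_eq' Finset.univ (φ θ s) (fun t => p t θ s)]
          simp
      _ = PSuc := by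
          rw [hPSuc]
          exact Finset.sum_congr rfl fun θ _ => Finset.sum_congr rfl fun s _ => (hφ θ s).symm
  have hνA_le : ∑ x ∈ A, ν x ≤ Qprior := by
    have hsupq_nn : ∀ s, 0 ≤ ⨆ t : 𝒯, q t s := fun s => by
      obtain ⟨t⟩ := (inferInstance : Nonempty 𝒯)
      exact le_trans (hqnn t s) (le_ciSup (Finite.bddAbove_range (fun t' => q t' s)) t)
    have step : ∑ x ∈ A, ν x = ∑ s : 𝒮, ∑ θ : Θ, q (φ θ s) s * r θ s / m s := by
      rw [hAdef, Finset.sum_filter, Fintype.sum_prod_type]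
      simp only [Fintype.sum_prod_type]
      calc ∑ t : 𝒯, ∑ θ : Θ, ∑ s : 𝒮, (if t = φ θ s then q t s * r θ s / m s else 0)
          = ∑ θ : Θ, ∑ s : 𝒮, ∑ t : 𝒯, (if t = φ θ s then q t s * r θ s / m s else 0) := by
            rw [Finset.sum_comm]
            exact Finset.sum_congr rfl fun θ _ => Finset.sum_comm
        _ = ∑ θ : Θ, ∑ s : 𝒮, q (φ θ s) s * r θ s / m s := by
            refine Finset.sum_congr rfl fun θ _ => Finset.sum_congr rfl fun s _ => ?_
            rw [Finset.sum_ite_eq' Finset.univ (φ θ s) (fun t => q t s * r θ s / m s)]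
            simp
        _ = ∑ s : 𝒮, ∑ θ : Θ, q (φ θ s) s * r θ s / m s := Finset.sum_comm
    rw [step, hQprior]
    refine Finset.sum_le_sum fun s _ => ?_
    by_cases hm0 : m s = 0
    · have hr0 : ∀ θ, r θ s = 0 := fun θ =>
        le_antisymm (hm0 ▸ hr_le_m θ s) (hrnn θ s)
      calc ∑ θ : Θ, q (φ θ s) s * r θ s / m s = 0 := by
            refine Finset.sum_eq_zero fun θ _ => ?_
            rw [hr0 θ]; ring
        _ ≤ ⨆ t : 𝒯, q t s := hsupq_nn s
    · have hmpos : 0 < m s := lt_of_le_of_ne (hmnn s) (Ne.symm hm0)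
      calc ∑ θ : Θ, q (φ θ s) s * r θ s / m s
          ≤ ∑ θ : Θ, (⨆ t : 𝒯, q t s) * r θ s / m s := by
            refine Finset.sum_le_sum fun θ _ => ?_
            have hb : q (φ θ s) s ≤ ⨆ t : 𝒯, q t s :=
              le_ciSup (Finite.bddAbove_range (fun t' => q t' s)) (φ θ s)
            have : 0 ≤ r θ s / m s := div_nonneg (hrnn θ s) (hmnn s)
            calc q (φ θ s) s * r θ s / m s = q (φ θ s) s * (r θ s / m s) := by ring
              _ ≤ (⨆ t : 𝒯, q t s) * (r θ s / m s) := mul_le_mul_of_nonneg_right hb this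
              _ = (⨆ t : 𝒯, q t s) * r θ s / m s := by ring
        _ = (⨆ t : 𝒯, q t s) * (∑ θ : Θ, r θ s) / m s := by
            rw [← Finset.sum_div, ← Finset.mul_sum]
        _ = ⨆ t : 𝒯, q t s := by
            rw [← hm_eq s, mul_div_assoc, div_self hm0, mul_one]
  have hνtot : ∑ x : 𝒯 × Θ × 𝒮, ν x = 1 := by
    rw [Fintype.sum_prod_type]
    simp only [Fintype.sum_prod_type]
    calc ∑ t : 𝒯, ∑ θ : Θ, ∑ s : 𝒮, q t s * r θ s / m s
        = ∑ s : 𝒮, ∑ t : 𝒯, ∑ θ : Θ, q t s * r θ s / m s := by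
          rw [show (∑ t : 𝒯, ∑ θ : Θ, ∑ s : 𝒮, q t s * r θ s / m s)
              = ∑ t : 𝒯, ∑ s : 𝒮, ∑ θ : Θ, q t s * r θ s / m s from
            Finset.sum_congr rfl fun t _ => Finset.sum_comm]
          exact Finset.sum_comm
      _ = ∑ s : 𝒮, m s := by
          refine Finset.sum_congr rfl fun s _ => ?_
          by_cases hm0 : m s = 0
          · have hq0 : ∀ t, q t s = 0 := fun t =>
              le_antisymm (hm0 ▸ hq_le_m t s) (hqnn t s)
            rw [hm0]
            refine Finset.sum_eq_zero fun t _ => Finset.sum_eq_zero fun θ _ => ?_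
            rw [hq0 t]; ring
          · calc ∑ t : 𝒯, ∑ θ : Θ, q t s * r θ s / m s
                = ∑ t : 𝒯, q t s * (∑ θ : Θ, r θ s) / m s := by
                  refine Finset.sum_congr rfl fun t _ => ?_
                  rw [← Finset.sum_div, ← Finset.mul_sum]
              _ = (∑ t : 𝒯, q t s) * (∑ θ : Θ, r θ s) / m s := by
                  rw [← Finset.sum_div, ← Finset.sum_mul]
              _ = m s * m s / m s := by rw [← hm_eq s]
              _ = m s := by rw [mul_div_assoc, div_self hm0, mul_one]
      _ = 1 := hstot
  -- complement set
  set Ac : Finset (𝒯 × Θ × 𝒮) :=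
    Finset.univ.filter (fun x => ¬ x.1 = φ x.2.1 x.2.2) with hAcdef
  have hsplitμ : ∑ x ∈ A, μ x + ∑ x ∈ Ac, μ x = ∑ x : 𝒯 × Θ × 𝒮, μ x := by
    rw [hAdef, hAcdef]
    exact Finset.sum_filter_add_sum_filter_not _ _ _
  have hsplitν : ∑ x ∈ A, ν x + ∑ x ∈ Ac, ν x = ∑ x : 𝒯 × Θ × 𝒮, ν x := by
    rw [hAdef, hAcdef]
    exact Finset.sum_filter_add_sum_filter_not _ _ _
  have hμAc : ∑ x ∈ Ac, μ x = 1 - PSuc := by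
    rw [hμtot] at hsplitμ; linarith [hμA]
  have hνAc : ∑ x ∈ Ac, ν x = 1 - ∑ x ∈ A, ν x := by
    rw [hνtot] at hsplitν; linarith
  -- numeric facts
  have hcardpos : (0 : ℝ) < Fintype.card 𝒯 := by
    exact_mod_cast Fintype.card_pos
  have hPpos : 0 < PSuc := by
    have hub : (1 : ℝ) ≤ (Fintype.card 𝒯 : ℝ) * PSuc := by
      rw [← hsum, hPSuc]
      calc ∑ t : 𝒯, ∑ θ : Θ, ∑ s : 𝒮, p t θ s
          ≤ ∑ _t : 𝒯, ∑ θ : Θ, ∑ s : 𝒮, ⨆ t' : 𝒯, p t' θ s := by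
            refine Finset.sum_le_sum fun t _ => Finset.sum_le_sum fun θ _ =>
              Finset.sum_le_sum fun s _ => ?_
            exact le_ciSup (Finite.bddAbove_range (fun t' => p t' θ s)) t
        _ = (Fintype.card 𝒯 : ℝ) * ∑ θ : Θ, ∑ s : 𝒮, ⨆ t' : 𝒯, p t' θ s := by
            rw [Finset.sum_const, Finset.card_univ, nsmul_eq_mul]
    nlinarith
  have hP1 : PSuc ≤ 1 := by
    have : 0 ≤ ∑ x ∈ Ac, μ x := Finset.sum_nonneg fun x _ => hμnn x
    linarith [hμAc]
  have hQle : Qprior ≤ PSuc := by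
    rw [hQprior, hPSuc]
    calc ∑ s : 𝒮, ⨆ t : 𝒯, ∑ θ : Θ, p t θ s
        ≤ ∑ s : 𝒮, ∑ θ : Θ, ⨆ t : 𝒯, p t θ s := by
          refine Finset.sum_le_sum fun s _ => ciSup_le fun t =>
            Finset.sum_le_sum fun θ _ => ?_
          exact le_ciSup (Finite.bddAbove_range (fun t' => p t' θ s)) t
      _ = ∑ θ : Θ, ∑ s : 𝒮, ⨆ t : 𝒯, p t θ s := Finset.sum_comm
  have hνApos : 0 < ∑ x ∈ A, ν x := by
    rcases eq_or_lt_of_le (Finset.sum_nonneg fun x (_ : x ∈ A) => hνnn x) with h0 | h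
    · exfalso
      have hν0 : ∀ x ∈ A, ν x = 0 :=
        (Finset.sum_eq_zero_iff_of_nonneg fun x _ => hνnn x).1 h0.symm
      have hμ0 : ∀ x ∈ A, μ x = 0 := fun x hx => hac x (hν0 x hx)
      have : ∑ x ∈ A, μ x = 0 := Finset.sum_eq_zero hμ0
      rw [hμA] at this
      exact absurd this (ne_of_gt hPpos)
    · exact h
  -- log-sum inequality on each part
  have k1 := logSum_aux A μ ν (fun x _ => hμnn x) (fun x _ => hνnn x)
    (fun x _ hx => hac x hx)
  have k2 := logSum_aux Ac μ ν (fun x _ => hμnn x) (fun x _ => hνnn x)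
    (fun x _ hx => hac x hx)
  rw [hμA] at k1
  rw [hμAc, hνAc] at k2
  have kl := klMono_aux PSuc (∑ x ∈ A, ν x) Qprior hP1 hνApos hνA_le hQle
  have hsum_split : ∑ x ∈ A, μ x * log (μ x / ν x) + ∑ x ∈ Ac, μ x * log (μ x / ν x)
      = ∑ x : 𝒯 × Θ × 𝒮, μ x * log (μ x / ν x) := by
    rw [hAdef, hAcdef]
    exact Finset.sum_filter_add_sum_filter_not _ _ _
  rw [ge_iff_le, hLHS, ← hsum_split]
  linarith [k1, k2, kl]
end

section
/- (Generalization gap of least-squares linear regression with Gaussian noise.) Fix x₁,…,xₙ ∈ ℝ^d with invertible Gram matrix x̄ = Σᵢ xᵢxᵢᵀ, fix β ∈ ℝ^d, and let Yᵢ = βᵀxᵢ + Wᵢ and Y′ᵢ = βᵀxᵢ + W′ᵢ with (Wᵢ), (W′ᵢ) all independent, mean zero, variance σ². Let θ̂ = (x xᵀ)⁻¹ x Yᵀ be the least-squares estimator. Then E[(1/n)Σᵢ(θ̂ᵀxᵢ − Y′ᵢ)²] − E[(1/n)Σᵢ(θ̂ᵀxᵢ − Yᵢ)²] = 2dσ²/n.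 -/
open MeasureTheory ProbabilityTheory Matrix

/-- Least-squares estimator `θ̂ = (x xᵀ)⁻¹ x yᵀ` for the feature matrix `x` and
response vector `y`. -/
noncomputable def lsEstimator {d n : ℕ} (x : Matrix (Fin d) (Fin n) ℝ)
    (y : Fin n → ℝ) : Fin d → ℝ :=
  (x * x.transpose)⁻¹ *ᵥ (x *ᵥ y)

/-!
With the hat matrix `H = xᵀ (x xᵀ)⁻¹ x`, the fitted values are `xᵀβ + H W`, so on the joint
noise vector `V = (W, W′)` the test residuals are `A V` and the training residuals `B V`, where
`A = [H | -1]` and `B = [H - 1 | 0]`. Uncorrelated noise of variance `σ²` gives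
`E |A V|² = σ² tr (A Aᵀ)`, and `tr (A Aᵀ) - tr (B Bᵀ) = tr H + tr Hᵀ = 2 tr ((x xᵀ)⁻¹ x xᵀ) = 2d`.
-/

open Finset

section IsotropicNoise

variable {Ω ι : Type*} [MeasurableSpace Ω] {μ : Measure Ω} {V : ι → Ω → ℝ} {σ : ℝ}

lemma integral_mul_eq_ite_of_iIndepFun [DecidableEq ι] (hmeas : ∀ k, Measurable (V k))
    (hindep : iIndepFun V μ) (hmean : ∀ k, ∫ ω, V k ω ∂μ = 0)
    (hvar : ∀ k, ∫ ω, V k ω ^ 2 ∂μ = σ ^ 2) (k l : ι) :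
    ∫ ω, V k ω * V l ω ∂μ = if k = l then σ ^ 2 else 0 := by
  split_ifs with hkl
  · subst hkl
    simpa only [sq] using hvar k
  · simpa [hmean] using (hindep.indepFun hkl).integral_mul_eq_mul_integral
      (hmeas k).aestronglyMeasurable (hmeas l).aestronglyMeasurable

variable [Fintype ι]

lemma sq_dotProduct (c v : ι → ℝ) :
    (c ⬝ᵥ v) ^ 2 = ∑ k, ∑ l, c k * c l * (v k * v l) := by
  simp only [sq, dotProduct, sum_mul_sum]
  exact sum_congr rfl fun k _ => sum_congr rfl fun l _ => by ring

lemma integrable_dotProduct_sq (hint : ∀ k l, Integrable (fun ω => V k ω * V l ω) μ)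
    (c : ι → ℝ) : Integrable (fun ω => (c ⬝ᵥ fun k => V k ω) ^ 2) μ := by
  simp_rw [sq_dotProduct]
  exact integrable_finsetSum _ fun k _ =>
    integrable_finsetSum _ fun l _ => (hint k l).const_mul _

variable [DecidableEq ι]

lemma integral_dotProduct_sq (hint : ∀ k l, Integrable (fun ω => V k ω * V l ω) μ)
    (hcov : ∀ k l, ∫ ω, V k ω * V l ω ∂μ = if k = l then σ ^ 2 else 0) (c : ι → ℝ) :
    ∫ ω, (c ⬝ᵥ fun k => V k ω) ^ 2 ∂μ = σ ^ 2 * (c ⬝ᵥ c) := by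
  simp_rw [sq_dotProduct]
  rw [integral_finsetSum _ fun k _ =>
    integrable_finsetSum _ fun l _ => (hint k l).const_mul _]
  simp_rw [integral_finsetSum _ fun l _ => (hint _ l).const_mul _, integral_const_mul, hcov]
  simp [dotProduct, mul_sum, mul_comm]

lemma integral_sum_mulVec_sq (hint : ∀ k l, Integrable (fun ω => V k ω * V l ω) μ)
    (hcov : ∀ k l, ∫ ω, V k ω * V l ω ∂μ = if k = l then σ ^ 2 else 0)
    {m : Type*} [Fintype m] (A : Matrix m ι ℝ) :
    ∫ ω, ∑ i, (A *ᵥ fun k => V k ω) i ^ 2 ∂μ = σ ^ 2 * trace (A * Aᵀ) := by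
  change ∫ ω, ∑ i, (A i ⬝ᵥ fun k => V k ω) ^ 2 ∂μ = _
  rw [integral_finsetSum _ fun i _ => integrable_dotProduct_sq hint (A i)]
  simp_rw [integral_dotProduct_sq hint hcov, ← mul_sum]
  rfl

end IsotropicNoise

lemma trace_fromCols_mul_transpose_sub {m : Type*} [Fintype m] [DecidableEq m]
    (H : Matrix m m ℝ) :
    trace (fromCols H (-1 : Matrix m m ℝ) * (fromCols H (-1 : Matrix m m ℝ))ᵀ) -
      trace (fromCols (H - 1) (0 : Matrix m m ℝ) * (fromCols (H - 1) (0 : Matrix m m ℝ))ᵀ) =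
      2 * trace H := by
  simp only [transpose_fromCols, fromCols_mul_fromRows, transpose_sub, transpose_one,
    transpose_neg, transpose_zero, Matrix.mul_sub, Matrix.sub_mul, trace_add, trace_sub,
    Matrix.mul_one, Matrix.one_mul, Matrix.mul_zero, add_zero, neg_mul_neg, trace_transpose]
  ring

section LeastSquares

variable {d n : ℕ}

noncomputable def hatMatrix (x : Matrix (Fin d) (Fin n) ℝ) : Matrix (Fin n) (Fin n) ℝ :=
  xᵀ * (x * xᵀ)⁻¹ * x

variable {x : Matrix (Fin d) (Fin n) ℝ}

lemma trace_hatMatrix (hx : IsUnit (x * xᵀ).det) : trace (hatMatrix x) = d := by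
  rw [hatMatrix, trace_mul_comm, ← Matrix.mul_assoc, mul_nonsing_inv _ hx, trace_one,
    Fintype.card_fin]

lemma lsEstimator_vecMul_add (hx : IsUnit (x * xᵀ).det) (β : Fin d → ℝ) (w : Fin n → ℝ) :
    lsEstimator x (β ᵥ* x + w) = β + ((x * xᵀ)⁻¹ * x) *ᵥ w := by
  rw [lsEstimator, ← mulVec_transpose, mulVec_add, mulVec_mulVec, mulVec_add, mulVec_mulVec,
    mulVec_mulVec, nonsing_inv_mul _ hx, one_mulVec]

lemma lsEstimator_vecMul (hx : IsUnit (x * xᵀ).det) (β : Fin d → ℝ) (w : Fin n → ℝ) :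
    lsEstimator x (β ᵥ* x + w) ᵥ* x = β ᵥ* x + hatMatrix x *ᵥ w := by
  rw [lsEstimator_vecMul_add hx, add_vecMul, ← mulVec_transpose x (((x * xᵀ)⁻¹ * x) *ᵥ w),
    mulVec_mulVec, hatMatrix, Matrix.mul_assoc]

lemma lsEstimator_test_residual_eq_mulVec (hx : IsUnit (x * xᵀ).det) (β : Fin d → ℝ)
    (w : Fin n ⊕ Fin n → ℝ) (i : Fin n) :
    (lsEstimator x (fun i' => vecMul β x i' + w (Sum.inl i')) ᵥ* x) i -
      (vecMul β x i + w (Sum.inr i)) = (fromCols (hatMatrix x) (-1) *ᵥ w) i := by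
  rw [show (fun i' => vecMul β x i' + w (Sum.inl i')) = β ᵥ* x + w ∘ Sum.inl from rfl,
    lsEstimator_vecMul hx, fromCols_mulVec]
  simp only [Pi.add_apply, add_sub_add_left_eq_sub, neg_mulVec, one_mulVec, Pi.neg_apply,
    Function.comp_apply]
  exact sub_eq_add_neg _ _

lemma lsEstimator_train_residual_eq_mulVec (hx : IsUnit (x * xᵀ).det) (β : Fin d → ℝ)
    (w : Fin n ⊕ Fin n → ℝ) (i : Fin n) :
    (lsEstimator x (fun i' => vecMul β x i' + w (Sum.inl i')) ᵥ* x) i -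
      (vecMul β x i + w (Sum.inl i)) = (fromCols (hatMatrix x - 1) 0 *ᵥ w) i := by
  rw [show (fun i' => vecMul β x i' + w (Sum.inl i')) = β ᵥ* x + w ∘ Sum.inl from rfl,
    lsEstimator_vecMul hx, fromCols_mulVec]
  simp [sub_mulVec]

end LeastSquares

theorem linear_regression_generalization_gap_general
    {Ω : Type*} [MeasurableSpace Ω] (μ : Measure Ω)
    (d n : ℕ)
    (x : Matrix (Fin d) (Fin n) ℝ) (hx : IsUnit (x * x.transpose).det)
    (β : Fin d → ℝ) (σ : ℝ)
    (V : (Fin n ⊕ Fin n) → Ω → ℝ)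
    (hmeas : ∀ k, Measurable (V k))
    (hindep : iIndepFun V μ)
    (hmean : ∀ k, ∫ ω, V k ω ∂μ = 0)
    (hvar : ∀ k, ∫ ω, (V k ω) ^ 2 ∂μ = σ ^ 2)
    (hint : ∀ k l, Integrable (fun ω => V k ω * V l ω) μ) :
    (∫ ω, (1 / (n : ℝ)) * ∑ i : Fin n,
        (vecMul (lsEstimator x (fun i' => vecMul β x i' + V (Sum.inl i') ω)) x i -
          (vecMul β x i + V (Sum.inr i) ω)) ^ 2 ∂μ) -
      (∫ ω, (1 / (n : ℝ)) * ∑ i : Fin n,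
        (vecMul (lsEstimator x (fun i' => vecMul β x i' + V (Sum.inl i') ω)) x i -
          (vecMul β x i + V (Sum.inl i) ω)) ^ 2 ∂μ) =
      2 * (d : ℝ) * σ ^ 2 / (n : ℝ) := by
  have hcov := integral_mul_eq_ite_of_iIndepFun hmeas hindep hmean hvar
  -- instantiated at `fun k => V k ω` so that the rewrites match under the binder `ω`
  simp only [fun ω => lsEstimator_test_residual_eq_mulVec hx β (fun k => V k ω),
    fun ω => lsEstimator_train_residual_eq_mulVec hx β (fun k => V k ω)]
  rw [integral_const_mul, integral_const_mul, integral_sum_mulVec_sq hint hcov,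
    integral_sum_mulVec_sq hint hcov, ← mul_sub, ← mul_sub, trace_fromCols_mul_transpose_sub,
    trace_hatMatrix hx]
  ring

/-- **Generalization gap of least-squares linear regression.**
Fixed features `x₁,…,xₙ ∈ ℝ^d` (columns of `x`) with invertible Gram matrix `x xᵀ`,
responses `Yᵢ = βᵀxᵢ + Wᵢ` and independent test responses `Y′ᵢ = βᵀxᵢ + W′ᵢ`, where
all noise variables (`V (inl i) = Wᵢ`, `V (inr i) = W′ᵢ`) are independent with mean `0`
and variance `σ²`.  Then the expected test error minus the expected training error of
the least-squares estimator equals `2dσ²/n`. -/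
theorem linear_regression_generalization_gap
    {Ω : Type*} [MeasurableSpace Ω] (μ : Measure Ω) [IsProbabilityMeasure μ]
    (d n : ℕ) (hn : 0 < n)
    (x : Matrix (Fin d) (Fin n) ℝ) (hx : IsUnit (x * x.transpose).det)
    (β : Fin d → ℝ) (σ : ℝ) (hσ : 0 < σ)
    (V : (Fin n ⊕ Fin n) → Ω → ℝ)
    (hmeas : ∀ k, Measurable (V k))
    (hindep : iIndepFun V μ)
    (hmean : ∀ k, ∫ ω, V k ω ∂μ = 0)
    (hvar : ∀ k, ∫ ω, (V k ω) ^ 2 ∂μ = σ ^ 2)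
    (hint : ∀ k l, Integrable (fun ω => V k ω * V l ω) μ) :
    (∫ ω, (1 / (n : ℝ)) * ∑ i : Fin n,
        (vecMul (lsEstimator x (fun i' => vecMul β x i' + V (Sum.inl i') ω)) x i -
          (vecMul β x i + V (Sum.inr i) ω)) ^ 2 ∂μ) -
      (∫ ω, (1 / (n : ℝ)) * ∑ i : Fin n,
        (vecMul (lsEstimator x (fun i' => vecMul β x i' + V (Sum.inl i') ω)) x i -
          (vecMul β x i + V (Sum.inl i) ω)) ^ 2 ∂μ) =
      2 * (d : ℝ) * σ ^ 2 / (n : ℝ) :=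
  linear_regression_generalization_gap_general μ d n x hx β σ V hmeas hindep hmean hvar hint
end
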